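/- arXiv:1507.01180 — 4 statements merged into one kernel-verified Lean document; each statement's English description precedes it below -/
import Mathlib

section
/- For every w ∈ B_n one has dp(w) ≤ binom(n+1, 2) = n(n+1)/2, with equality if and only if w is the negative identity [−1, −2, …, −n] (i.e., w(i) = −i for all i∈[n]). -/
open Equiv

/-- The defining condition for membership in the signed permutation group `B_n`:
a permutation of `ℤ` that commutes with negation and fixes every integer of
absolute value greater than `n`. -/
def IsSignedPerm (n : ℕ) (w : Equiv.Perm ℤ) : Prop :=
  (∀ i : ℤ, w (-i) = -(w i)) ∧ ∀ i : ℤ, (n : ℤ) < |i| → w i = i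

/-- The signed permutation group `B_n`, realized as a subgroup of the permutations of `ℤ`. -/
def BGroup (n : ℕ) : Subgroup (Equiv.Perm ℤ) where
  carrier := {w | IsSignedPerm n w}
  one_mem' := ⟨fun _ => rfl, fun _ _ => rfl⟩
  mul_mem' := by
    rintro a b ⟨ha1, ha2⟩ ⟨hb1, hb2⟩
    refine ⟨fun i => ?_, fun i hi => ?_⟩
    · simp only [Equiv.Perm.mul_apply, hb1, ha1]
    · simp only [Equiv.Perm.mul_apply, hb2 i hi, ha2 i hi]
  inv_mem' := by
    rintro a ⟨ha1, ha2⟩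
    refine ⟨fun i => a.injective ?_, fun i hi => a.injective ?_⟩
    · rw [Equiv.Perm.coe_inv, Equiv.apply_symm_apply, ha1, Equiv.apply_symm_apply]
    · rw [Equiv.Perm.coe_inv, Equiv.apply_symm_apply, ha2 i hi]

/-- `Neg(w)`: the set of positions `i ∈ [1, n]` carrying a negative entry. -/
noncomputable def negSet (n : ℕ) (w : Equiv.Perm ℤ) : Finset ℤ :=
  (Finset.Icc (1 : ℤ) (n : ℤ)).filter (fun i => w i < 0)

/-- `neg(w)`: the number of negative entries in the window of `w`. -/
noncomputable def negB (n : ℕ) (w : Equiv.Perm ℤ) : ℕ := (negSet n w).card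

/-- `k` is a boundary of the type B block decomposition of `w`, i.e. `w` maps
`{1, …, k}` onto `{±1, …, ±k}` (for `0 ≤ k ≤ n`). -/
def IsBdry (n : ℕ) (w : Equiv.Perm ℤ) (k : ℕ) : Prop :=
  k ≤ n ∧ ∀ i : ℤ, 1 ≤ i → i ≤ (k : ℤ) → |w i| ≤ (k : ℤ)

/-- The number of negative entries among the first `k` entries of the window of `w`. -/
noncomputable def negUpTo (w : Equiv.Perm ℤ) (k : ℕ) : ℕ :=
  ((Finset.Icc (1 : ℤ) (k : ℤ)).filter (fun i => w i < 0)).card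

/-- `o^B(w)`: the number of blocks of the type B decomposition of `w` containing an odd
number of negative entries.  A block is the interval between two consecutive boundaries,
and it is counted here via its right endpoint `k` (with left endpoint `k'` the previous
boundary); it has an odd number of negative entries exactly when the parities of
`negUpTo w k` and `negUpTo w k'` differ. -/
noncomputable def oB (n : ℕ) (w : Equiv.Perm ℤ) : ℕ :=
  {k : ℕ | 1 ≤ k ∧ IsBdry n w k ∧ ∃ k' < k, IsBdry n w k' ∧
    (∀ m : ℕ, k' < m → m < k → ¬ IsBdry n w m) ∧
    negUpTo w k % 2 ≠ negUpTo w k' % 2}.ncard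

/-- The number of blocks of the type B decomposition of `w`
(each block is counted via its right endpoint, a nonzero boundary). -/
noncomputable def numBlocksB (n : ℕ) (w : Equiv.Perm ℤ) : ℕ :=
  {k : ℕ | 1 ≤ k ∧ IsBdry n w k}.ncard

/-- The number of blocks of the type D decomposition of `w ∈ D_n`
(each block is counted via its right endpoint, a nonzero boundary at which the
number of preceding negative entries is even). -/
noncomputable def numBlocksD (n : ℕ) (w : Equiv.Perm ℤ) : ℕ :=
  {k : ℕ | 1 ≤ k ∧ IsBdry n w k ∧ Even (negUpTo w k)}.ncard

/-- `o^D(w)`: the number of type B blocks of `w` minus the number of type D blocks of `w`. -/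
noncomputable def oD (n : ℕ) (w : Equiv.Perm ℤ) : ℤ :=
  (numBlocksB n w : ℤ) - (numBlocksD n w : ℤ)

/-- `BReflDepth n t d` means that `t` is a reflection of `B_n` and `d` is its depth:
`t_{ij}` has depth `j - i`, `t_{-i,j}` has depth `i + j - 1`, and `t_{-i,i}` has depth `i`. -/
def BReflDepth (n : ℕ) (t : Equiv.Perm ℤ) (d : ℤ) : Prop :=
  (∃ i j : ℤ, 1 ≤ i ∧ i < j ∧ j ≤ (n : ℤ) ∧
    t = Equiv.swap i j * Equiv.swap (-i) (-j) ∧ d = j - i) ∨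
  (∃ i j : ℤ, 1 ≤ i ∧ i < j ∧ j ≤ (n : ℤ) ∧
    t = Equiv.swap (-i) j * Equiv.swap i (-j) ∧ d = i + j - 1) ∨
  (∃ i : ℤ, 1 ≤ i ∧ i ≤ (n : ℤ) ∧ t = Equiv.swap (-i) i ∧ d = i)

/-- `t` is a reflection of `B_n`. -/
def IsBRefl (n : ℕ) (t : Equiv.Perm ℤ) : Prop := ∃ d, BReflDepth n t d

/-- `DReflDepth n t d` means that `t` is a reflection of `D_n` and `d` is its depth:
`t_{ij}` has depth `j - i` and `t_{-i,j}` has depth `i + j - 2`. -/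
def DReflDepth (n : ℕ) (t : Equiv.Perm ℤ) (d : ℤ) : Prop :=
  (∃ i j : ℤ, 1 ≤ i ∧ i < j ∧ j ≤ (n : ℤ) ∧
    t = Equiv.swap i j * Equiv.swap (-i) (-j) ∧ d = j - i) ∨
  (∃ i j : ℤ, 1 ≤ i ∧ i < j ∧ j ≤ (n : ℤ) ∧
    t = Equiv.swap (-i) j * Equiv.swap i (-j) ∧ d = i + j - 2)

/-- `t` is a reflection of `D_n`. -/
def IsDRefl (n : ℕ) (t : Equiv.Perm ℤ) : Prop := ∃ d, DReflDepth n t d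

/-- The depth of `w ∈ B_n`: the minimum, over all factorizations of `w` into reflections
of `B_n`, of the sum of the depths of the factors. -/
noncomputable def depthB (n : ℕ) (w : Equiv.Perm ℤ) : ℤ :=
  sInf {m : ℤ | ∃ L : List (Equiv.Perm ℤ × ℤ),
    (∀ p ∈ L, BReflDepth n p.1 p.2) ∧ (L.map Prod.fst).prod = w ∧ (L.map Prod.snd).sum = m}

/-- The depth of `w ∈ D_n`: the minimum, over all factorizations of `w` into reflections
of `D_n`, of the sum of the depths of the factors. -/
noncomputable def depthD (n : ℕ) (w : Equiv.Perm ℤ) : ℤ :=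
  sInf {m : ℤ | ∃ L : List (Equiv.Perm ℤ × ℤ),
    (∀ p ∈ L, DReflDepth n p.1 p.2) ∧ (L.map Prod.fst).prod = w ∧ (L.map Prod.snd).sum = m}

/-- The Coxeter generating set `S_B = {t_{-1,1}, t_{12}, …, t_{n-1,n}}` of `B_n`. -/
def SB (n : ℕ) : Set (Equiv.Perm ℤ) :=
  {s | (1 ≤ n ∧ s = Equiv.swap (-1 : ℤ) 1) ∨
    ∃ i : ℤ, 1 ≤ i ∧ i + 1 ≤ (n : ℤ) ∧
      s = Equiv.swap i (i + 1) * Equiv.swap (-i) (-(i + 1))}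

/-- The Coxeter generating set `S_D = {t_{-1,2}, t_{12}, …, t_{n-1,n}}` of `D_n`. -/
def SD (n : ℕ) : Set (Equiv.Perm ℤ) :=
  {s | (2 ≤ n ∧ s = Equiv.swap (-1 : ℤ) 2 * Equiv.swap (1 : ℤ) (-2)) ∨
    ∃ i : ℤ, 1 ≤ i ∧ i + 1 ≤ (n : ℤ) ∧
      s = Equiv.swap i (i + 1) * Equiv.swap (-i) (-(i + 1))}

/-- The Coxeter length `ℓ_S(w)` of `w ∈ B_n`: the minimal length of a word in `S_B`
whose product is `w`. -/
noncomputable def lenB (n : ℕ) (w : Equiv.Perm ℤ) : ℕ :=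
  sInf {r : ℕ | ∃ L : List (Equiv.Perm ℤ), (∀ s ∈ L, s ∈ SB n) ∧ L.prod = w ∧ L.length = r}

/-- The Coxeter length `ℓ_S(w)` of `w ∈ D_n`: the minimal length of a word in `S_D`
whose product is `w`. -/
noncomputable def lenD (n : ℕ) (w : Equiv.Perm ℤ) : ℕ :=
  sInf {r : ℕ | ∃ L : List (Equiv.Perm ℤ), (∀ s ∈ L, s ∈ SD n) ∧ L.prod = w ∧ L.length = r}

/-- The reflection length `ℓ_T(w)` of `w ∈ B_n`: the minimal number of reflections
whose product is `w`. -/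
noncomputable def ellTB (n : ℕ) (w : Equiv.Perm ℤ) : ℕ :=
  sInf {r : ℕ | ∃ L : List (Equiv.Perm ℤ), (∀ t ∈ L, IsBRefl n t) ∧ L.prod = w ∧ L.length = r}

/-- `Σ_{i ∈ [n], w(i) > i} (w(i) - i)`. -/
noncomputable def excSum (n : ℕ) (w : Equiv.Perm ℤ) : ℤ :=
  ∑ i ∈ (Finset.Icc (1 : ℤ) (n : ℤ)).filter (fun i => i < w i), (w i - i)

/-- `Σ_{i ∈ Neg(w)} |w(i)|`. -/
noncomputable def negAbsSum (n : ℕ) (w : Equiv.Perm ℤ) : ℤ :=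
  ∑ i ∈ (Finset.Icc (1 : ℤ) (n : ℤ)).filter (fun i => w i < 0), |w i|

/-- The even signed permutation group `D_n`, the set of elements of `B_n` with an even
number of negative window entries. -/
def DSet (n : ℕ) : Set (Equiv.Perm ℤ) := {w | w ∈ BGroup n ∧ Even (negB n w)}


/-! ### Signed swap helpers -/

def sp (a b : ℤ) : Perm ℤ := Equiv.swap a b * Equiv.swap (-a) (-b)
def s0 (a : ℤ) : Perm ℤ := Equiv.swap (-a) a
def sm (a b : ℤ) : Perm ℤ := Equiv.swap (-a) b * Equiv.swap a (-b)

lemma sp_apply {a b : ℤ} (ha : 1 ≤ a) (hab : a < b) (x : ℤ) :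
    sp a b x = if x = a then b else if x = b then a else if x = -a then -b
      else if x = -b then -a else x := by
  simp only [sp, Equiv.Perm.mul_apply, Equiv.swap_apply_def]
  split_ifs <;> omega

lemma s0_apply {a : ℤ} (ha : 1 ≤ a) (x : ℤ) :
    s0 a x = if x = a then -a else if x = -a then a else x := by
  simp only [s0, Equiv.swap_apply_def]
  split_ifs <;> omega

lemma sm_apply {a b : ℤ} (ha : 1 ≤ a) (hab : a < b) (x : ℤ) :
    sm a b x = if x = a then -b else if x = b then -a else if x = -a then b
      else if x = -b then a else x := by
  simp only [sm, Equiv.Perm.mul_apply, Equiv.swap_apply_def]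
  split_ifs <;> omega

lemma sp_mul_self {a b : ℤ} (ha : 1 ≤ a) (hab : a < b) : sp a b * sp a b = 1 := by
  ext x
  simp only [sp, Equiv.Perm.mul_apply, Equiv.swap_apply_def, Equiv.Perm.one_apply]
  split_ifs <;> omega

lemma s0_mul_self (a : ℤ) : s0 a * s0 a = 1 := Equiv.swap_mul_self _ _

set_option maxHeartbeats 1000000 in
lemma sp_braid {i j : ℤ} (hi : 1 ≤ i) (hij : i + 1 < j) :
    sp i (i+1) * sp i j = sp (i+1) j * sp i (i+1) := by
  ext x
  rw [Equiv.Perm.mul_apply, Equiv.Perm.mul_apply,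
    sp_apply (by omega : (1:ℤ) ≤ i) (by omega : i < j),
    sp_apply (by omega : (1:ℤ) ≤ i) (by omega : i < i+1),
    sp_apply (by omega : (1:ℤ) ≤ i+1) (by omega : i+1 < j),
    sp_apply (by omega : (1:ℤ) ≤ i) (by omega : i < i+1)]
  split_ifs <;> omega

lemma sp_conj {i j : ℤ} (hi : 1 ≤ i) (hij : i + 1 < j) :
    sp i j = sp i (i+1) * (sp (i+1) j * sp i (i+1)) := by
  calc sp i j = (sp i (i+1) * sp i (i+1)) * sp i j := by
        rw [sp_mul_self (by omega : (1:ℤ) ≤ i) (by omega), one_mul]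
  _ = sp i (i+1) * (sp i (i+1) * sp i j) := by group
  _ = sp i (i+1) * (sp (i+1) j * sp i (i+1)) := by rw [sp_braid hi hij]

set_option maxHeartbeats 1000000 in
lemma s0_braid {i : ℤ} (hi : 2 ≤ i) :
    sp (i-1) i * s0 i = s0 (i-1) * sp (i-1) i := by
  ext x
  rw [Equiv.Perm.mul_apply, Equiv.Perm.mul_apply,
    sp_apply (by omega : (1:ℤ) ≤ i-1) (by omega : i-1 < i),
    s0_apply (by omega : (1:ℤ) ≤ i),
    s0_apply (by omega : (1:ℤ) ≤ i-1),
    sp_apply (by omega : (1:ℤ) ≤ i-1) (by omega : i-1 < i)]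
  split_ifs <;> omega

lemma s0_conj {i : ℤ} (hi : 2 ≤ i) :
    s0 i = sp (i-1) i * (s0 (i-1) * sp (i-1) i) := by
  calc s0 i = (sp (i-1) i * sp (i-1) i) * s0 i := by
        rw [sp_mul_self (by omega : (1:ℤ) ≤ i-1) (by omega), one_mul]
  _ = sp (i-1) i * (sp (i-1) i * s0 i) := by group
  _ = sp (i-1) i * (s0 (i-1) * sp (i-1) i) := by rw [s0_braid hi]

set_option maxHeartbeats 1000000 in
lemma sm_braid {a b : ℤ} (ha : 1 ≤ a) (hab : a < b) :
    s0 a * sm a b = sp a b * s0 a := by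
  ext x
  rw [Equiv.Perm.mul_apply, Equiv.Perm.mul_apply,
    s0_apply ha, sm_apply ha hab, sp_apply ha hab, s0_apply ha]
  split_ifs <;> omega

lemma sm_conj {a b : ℤ} (ha : 1 ≤ a) (hab : a < b) :
    sm a b = s0 a * (sp a b * s0 a) := by
  calc sm a b = (s0 a * s0 a) * sm a b := by rw [s0_mul_self, one_mul]
  _ = s0 a * (s0 a * sm a b) := by group
  _ = s0 a * (sp a b * s0 a) := by rw [sm_braid ha hab]

/-! ### membership -/

lemma sp_mem {n : ℕ} {a b : ℤ} (ha : 1 ≤ a) (hab : a < b) (hb : b ≤ (n:ℤ)) :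
    IsSignedPerm n (sp a b) := by
  constructor
  · intro i
    rw [sp_apply ha hab, sp_apply ha hab]
    split_ifs <;> omega
  · intro i hi
    have hi' : i < -(n:ℤ) ∨ (n:ℤ) < i := by rcases abs_cases i with ⟨h1,_⟩|⟨h1,_⟩ <;> omega
    rw [sp_apply ha hab]; split_ifs <;> omega

lemma s0_mem {n : ℕ} {a : ℤ} (ha : 1 ≤ a) (hb : a ≤ (n:ℤ)) :
    IsSignedPerm n (s0 a) := by
  constructor
  · intro i
    rw [s0_apply ha, s0_apply ha]
    split_ifs <;> omega
  · intro i hi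
    have hi' : i < -(n:ℤ) ∨ (n:ℤ) < i := by rcases abs_cases i with ⟨h1,_⟩|⟨h1,_⟩ <;> omega
    rw [s0_apply ha]; split_ifs <;> omega

lemma sm_mem {n : ℕ} {a b : ℤ} (ha : 1 ≤ a) (hab : a < b) (hb : b ≤ (n:ℤ)) :
    IsSignedPerm n (sm a b) := by
  constructor
  · intro i
    rw [sm_apply ha hab, sm_apply ha hab]
    split_ifs <;> omega
  · intro i hi
    have hi' : i < -(n:ℤ) ∨ (n:ℤ) < i := by rcases abs_cases i with ⟨h1,_⟩|⟨h1,_⟩ <;> omega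
    rw [sm_apply ha hab]; split_ifs <;> omega

lemma isp_mul {n : ℕ} {u v : Perm ℤ} (hu : IsSignedPerm n u) (hv : IsSignedPerm n v) :
    IsSignedPerm n (u * v) := by
  refine ⟨fun i => ?_, fun i hi => ?_⟩
  · simp only [Equiv.Perm.mul_apply, hv.1, hu.1]
  · simp only [Equiv.Perm.mul_apply, hv.2 i hi, hu.2 i hi]

/-! ### The potential L = inversions + negatives -/

noncomputable def Dw (n : ℕ) : Finset ℤ := (Finset.Icc (-(n:ℤ)) n).erase 0

noncomputable def invSet (n : ℕ) (w : Perm ℤ) : Finset (ℤ × ℤ) :=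
  ((Dw n) ×ˢ (Dw n)).filter fun p => p.1 < p.2 ∧ w p.2 < w p.1

noncomputable def LB (n : ℕ) (w : Perm ℤ) : ℤ := (invSet n w).card + negB n w

lemma mem_Dw {n : ℕ} {x : ℤ} : x ∈ Dw n ↔ x ≠ 0 ∧ -(n:ℤ) ≤ x ∧ x ≤ n := by
  simp [Dw, Finset.mem_erase, Finset.mem_Icc, and_assoc]

lemma isp_zero {n : ℕ} {w : Perm ℤ} (hw : IsSignedPerm n w) : w 0 = 0 := by
  have := hw.1 0
  simp only [neg_zero] at this
  omega

lemma isp_maps {n : ℕ} {w : Perm ℤ} (hw : IsSignedPerm n w) {x : ℤ} (hx : x ∈ Dw n) :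
    w x ∈ Dw n := by
  rw [mem_Dw] at hx ⊢
  refine ⟨fun h => hx.1 (w.injective (h.trans (isp_zero hw).symm)), ?_⟩
  by_contra hcon
  have habs : (n:ℤ) < |w x| := by rcases abs_cases (w x) with ⟨h1,_⟩|⟨h1,_⟩ <;> omega
  have := hw.2 (w x) habs
  have hx' := w.injective this
  rcases abs_cases (w x) with ⟨h1,_⟩|⟨h1,_⟩ <;> omega

lemma inv_subadd {n : ℕ} {u v : Perm ℤ} (hu : IsSignedPerm n u) (hv : IsSignedPerm n v) :
    (invSet n (u * v)).card ≤ (invSet n u).card + (invSet n v).card := by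
  classical
  have hsplit := Finset.card_filter_add_card_filter_not
    (s := invSet n (u * v)) (p := fun p => v p.2 < v p.1)
  have h1 : ((invSet n (u * v)).filter fun p => v p.2 < v p.1) ⊆ invSet n v := by
    intro p hp
    simp only [invSet, Finset.mem_filter, Finset.mem_product] at hp ⊢
    exact ⟨hp.1.1, hp.1.2.1, hp.2⟩
  have h2 : (((invSet n (u * v)).filter fun p => ¬ v p.2 < v p.1)).card ≤ (invSet n u).card := by
    apply Finset.card_le_card_of_injOn (fun p => (v p.1, v p.2))
    · intro p hp
      replace hp := (Finset.mem_filter (s := invSet n (u * v))).mp hp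
      simp only [Finset.coe_filter, Set.mem_setOf_eq, Finset.mem_coe, invSet, Finset.mem_filter, Finset.mem_product, Equiv.Perm.mul_apply] at hp ⊢
      obtain ⟨hp', hnv⟩ := hp
      obtain ⟨hpp, hlt, hinv⟩ := Finset.mem_filter.mp hp'
      obtain ⟨hp1, hp2⟩ := Finset.mem_product.mp hpp
      have hne : v p.1 ≠ v p.2 := fun h => (ne_of_lt hlt) (v.injective h)
      exact ⟨⟨isp_maps hv hp1, isp_maps hv hp2⟩, by omega, hinv⟩
    · intro p hp q hq hpq
      simp only [Prod.mk.injEq] at hpq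
      exact Prod.ext (v.injective hpq.1) (v.injective hpq.2)
  have h1' := Finset.card_le_card h1
  omega

lemma neg_subadd {n : ℕ} {u v : Perm ℤ} (hu : IsSignedPerm n u) (hv : IsSignedPerm n v) :
    (negB n (u * v) : ℤ) ≤ negB n u + negB n v := by
  classical
  have hsplit := Finset.card_filter_add_card_filter_not
    (s := negSet n (u * v)) (p := fun i => v i < 0)
  have h1 : ((negSet n (u * v)).filter fun i => v i < 0) ⊆ negSet n v := by
    intro i hi
    simp only [negSet, Finset.mem_filter] at hi ⊢
    exact ⟨hi.1.1, hi.2⟩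
  have h2 : (((negSet n (u * v)).filter fun i => ¬ v i < 0)).card ≤ (negSet n u).card := by
    apply Finset.card_le_card_of_injOn (fun i => v i)
    · intro i hi
      replace hi := (Finset.mem_filter (s := negSet n (u * v))).mp hi
      simp only [Finset.coe_filter, Set.mem_setOf_eq, Finset.mem_coe, negSet, Finset.mem_filter, Finset.mem_Icc, Equiv.Perm.mul_apply] at hi ⊢
      obtain ⟨hi', hnv⟩ := hi
      obtain ⟨hIcc, hneg⟩ := Finset.mem_filter.mp hi'
      obtain ⟨hi1, hi2⟩ := Finset.mem_Icc.mp hIcc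
      have hD : v i ∈ Dw n := isp_maps hv (by rw [mem_Dw]; omega)
      rw [mem_Dw] at hD
      exact ⟨⟨by omega, hD.2.2⟩, hneg⟩
    · intro i _ j _ hij
      exact v.injective hij
  have h1' := Finset.card_le_card h1
  simp only [negB]
  omega


lemma LB_subadd {n : ℕ} {u v : Perm ℤ} (hu : IsSignedPerm n u) (hv : IsSignedPerm n v) :
    LB n (u * v) ≤ LB n u + LB n v := by
  have h1 := inv_subadd hu hv
  have h2 := neg_subadd hu hv
  simp only [LB]
  push_cast at *
  omega

lemma isp_one {n : ℕ} : IsSignedPerm n (1 : Perm ℤ) :=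
  ⟨fun _ => rfl, fun _ _ => rfl⟩

lemma LB_one {n : ℕ} : LB n (1 : Perm ℤ) = 0 := by
  have h1 : invSet n (1 : Perm ℤ) = ∅ := by
    apply Finset.filter_false_of_mem
    intro p _
    simp only [Equiv.Perm.one_apply]
    omega
  have h2 : negSet n (1 : Perm ℤ) = ∅ := by
    apply Finset.filter_false_of_mem
    intro i hi
    simp only [Finset.mem_Icc] at hi
    simp only [Equiv.Perm.one_apply]
    omega
  simp [LB, h1, negB, h2]

lemma LB_sp_adj {n : ℕ} {i : ℤ} (hi : 1 ≤ i) (hin : i + 1 ≤ (n:ℤ)) :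
    LB n (sp i (i+1)) ≤ 2 := by
  have h1 : invSet n (sp i (i+1)) ⊆ {(i, i+1), (-(i+1), -i)} := by
    intro p hp
    simp only [invSet, Finset.mem_filter, Finset.mem_product, mem_Dw] at hp
    obtain ⟨⟨h1, h2⟩, hlt, hinv⟩ := hp
    rw [sp_apply (by omega) (by omega), sp_apply (by omega) (by omega)] at hinv
    simp only [Finset.mem_insert, Finset.mem_singleton, Prod.ext_iff]
    split_ifs at hinv <;> omega
  have h2 : negB n (sp i (i+1)) = 0 := by
    rw [negB, Finset.card_eq_zero]
    apply Finset.filter_false_of_mem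
    intro x hx
    simp only [Finset.mem_Icc] at hx
    rw [sp_apply (by omega) (by omega)]
    split_ifs <;> omega
  have := Finset.card_le_card h1
  have hc : ({(i, i+1), (-(i+1), -i)} : Finset (ℤ × ℤ)).card ≤ 2 :=
    (Finset.card_insert_le _ _).trans (by simp)
  simp only [LB, h2]
  push_cast
  omega

lemma LB_s0_one {n : ℕ} (h : 1 ≤ n) : LB n (s0 1) ≤ 2 := by
  have h1 : invSet n (s0 1) ⊆ {((-1 : ℤ), (1 : ℤ))} := by
    intro p hp
    simp only [invSet, Finset.mem_filter, Finset.mem_product, mem_Dw] at hp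
    obtain ⟨⟨h1, h2⟩, hlt, hinv⟩ := hp
    rw [s0_apply (by omega), s0_apply (by omega)] at hinv
    simp only [Finset.mem_singleton, Prod.ext_iff]
    split_ifs at hinv <;> omega
  have h2 : negSet n (s0 1) ⊆ {(1 : ℤ)} := by
    intro x hx
    simp only [negSet, Finset.mem_filter, Finset.mem_Icc] at hx
    obtain ⟨⟨hx1, hx2⟩, hneg⟩ := hx
    rw [s0_apply (by omega)] at hneg
    simp only [Finset.mem_singleton]
    split_ifs at hneg <;> omega
  have c1 : (invSet n (s0 1)).card ≤ 1 :=
    (Finset.card_le_card h1).trans_eq (Finset.card_singleton _)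
  have c2 : (negSet n (s0 1)).card ≤ 1 :=
    (Finset.card_le_card h2).trans_eq (Finset.card_singleton _)
  simp only [LB, negB]
  push_cast
  omega

lemma LB_sp_gen {n : ℕ} : ∀ (k : ℕ) (i j : ℤ), 1 ≤ i → i < j → j ≤ (n:ℤ) → j - i = k + 1 →
    LB n (sp i j) ≤ 4 * (j - i) - 2 := by
  intro k
  induction k with
  | zero =>
    intro i j h1 h2 h3 h4
    have : j = i + 1 := by omega
    subst this
    have := LB_sp_adj h1 h3
    omega
  | succ m ih =>
    intro i j h1 h2 h3 h4
    rw [sp_conj h1 (by omega)]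
    have hmem1 : IsSignedPerm n (sp i (i+1)) := sp_mem (by omega) (by omega) (by omega)
    have hmem2 : IsSignedPerm n (sp (i+1) j) := sp_mem (by omega) (by omega) (by omega)
    have e1 := LB_subadd hmem1 (isp_mul hmem2 hmem1)
    have e2 := LB_subadd hmem2 hmem1
    have e3 := LB_sp_adj (n := n) (i := i) (by omega) (by omega)
    have h4' : j - (i+1) = (m:ℤ) + 1 := by push_cast at h4; omega
    have e4 := ih (i+1) j (by omega) (by omega) (by omega) h4'
    push_cast at h4
    omega

lemma LB_sp' {n : ℕ} {i j : ℤ} (h1 : 1 ≤ i) (h2 : i < j) (h3 : j ≤ (n:ℤ)) :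
    LB n (sp i j) ≤ 4 * (j - i) - 2 :=
  LB_sp_gen (j - i - 1).toNat i j h1 h2 h3 (by omega)

lemma LB_s0_gen {n : ℕ} : ∀ (k : ℕ) (i : ℤ), 1 ≤ i → i ≤ (n:ℤ) → i = k + 1 →
    LB n (s0 i) ≤ 4 * i - 2 := by
  intro k
  induction k with
  | zero =>
    intro i h1 h2 h3
    have : i = 1 := by omega
    subst this
    have := LB_s0_one (n := n) (by omega)
    omega
  | succ m ih =>
    intro i h1 h2 h3
    rw [s0_conj (by omega)]
    have hmem1 : IsSignedPerm n (sp (i-1) i) := sp_mem (by omega) (by omega) (by omega)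
    have hmem2 : IsSignedPerm n (s0 (i-1)) := s0_mem (by omega) (by omega)
    have e1 := LB_subadd hmem1 (isp_mul hmem2 hmem1)
    have e2 := LB_subadd hmem2 hmem1
    have e3 : LB n (sp (i-1) i) ≤ 2 := by
      have := LB_sp_adj (n := n) (i := i - 1) (by omega) (by omega)
      have e : i - 1 + 1 = i := by omega
      rwa [e] at this
    have h4' : i - 1 = (m:ℤ) + 1 := by push_cast at h3; omega
    have e4 := ih (i-1) (by omega) (by omega) h4'
    push_cast at h3
    omega

lemma LB_s0' {n : ℕ} {i : ℤ} (h1 : 1 ≤ i) (h2 : i ≤ (n:ℤ)) :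
    LB n (s0 i) ≤ 4 * i - 2 :=
  LB_s0_gen (i - 1).toNat i h1 h2 (by omega)

lemma LB_sm' {n : ℕ} {a b : ℤ} (h1 : 1 ≤ a) (h2 : a < b) (h3 : b ≤ (n:ℤ)) :
    LB n (sm a b) ≤ 4 * (a + b - 1) - 2 := by
  rw [sm_conj h1 h2]
  have hmem1 : IsSignedPerm n (s0 a) := s0_mem (by omega) (by omega)
  have hmem2 : IsSignedPerm n (sp a b) := sp_mem (by omega) (by omega) (by omega)
  have e1 := LB_subadd hmem1 (isp_mul hmem2 hmem1)
  have e2 := LB_subadd hmem2 hmem1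
  have e3 := LB_s0' (n := n) h1 (by omega)
  have e4 := LB_sp' (n := n) h1 h2 h3
  omega

lemma sp_def (i j : ℤ) : Equiv.swap i j * Equiv.swap (-i) (-j) = sp i j := rfl
lemma s0_def (i : ℤ) : Equiv.swap (-i) i = s0 i := rfl
lemma sm_def (i j : ℤ) : Equiv.swap (-i) j * Equiv.swap i (-j) = sm i j := rfl

lemma refl_props {n : ℕ} {t : Perm ℤ} {d : ℤ} (h : BReflDepth n t d) :
    IsSignedPerm n t ∧ LB n t ≤ 4 * d - 2 ∧ 1 ≤ d := by
  rcases h with ⟨i, j, h1, h2, h3, ht, hd⟩ | ⟨i, j, h1, h2, h3, ht, hd⟩ | ⟨i, h1, h2, ht, hd⟩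
  · rw [ht, sp_def]
    exact ⟨sp_mem h1 h2 h3, by have := LB_sp' (n := n) h1 h2 h3; omega, by omega⟩
  · rw [ht, sm_def]
    exact ⟨sm_mem h1 h2 h3, by have := LB_sm' (n := n) h1 h2 h3; omega, by omega⟩
  · rw [ht, s0_def]
    exact ⟨s0_mem h1 h2, by have := LB_s0' (n := n) h1 h2; omega, by omega⟩

lemma list_LB {n : ℕ} : ∀ L : List (Perm ℤ × ℤ), (∀ p ∈ L, BReflDepth n p.1 p.2) →
    IsSignedPerm n (L.map Prod.fst).prod ∧
    LB n (L.map Prod.fst).prod ≤ 4 * (L.map Prod.snd).sum - 2 * (L.length : ℤ) := by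
  intro L
  induction L with
  | nil => intro _; simpa using ⟨isp_one, by rw [LB_one]⟩
  | cons p L ih =>
    intro hL
    have hp := refl_props (hL p List.mem_cons_self)
    have hrest := ih (fun q hq => hL q (List.mem_cons_of_mem p hq))
    simp only [List.map_cons, List.prod_cons, List.sum_cons, List.length_cons]
    refine ⟨isp_mul hp.1 hrest.1, ?_⟩
    have := LB_subadd hp.1 hrest.1
    push_cast
    omega

lemma card_Dw {n : ℕ} : (Dw n).card = 2 * n := by
  rw [Dw, Finset.card_erase_of_mem (by simp), Int.card_Icc]
  omega

lemma LB_w0 {n : ℕ} {w : Perm ℤ} (hw : IsSignedPerm n w)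
    (hneg : ∀ i : ℤ, 1 ≤ i → i ≤ (n:ℤ) → w i = -i) :
    2 * (n:ℤ) * n ≤ LB n w := by
  classical
  have hval : ∀ x ∈ Dw n, w x = -x := by
    intro x hx
    rw [mem_Dw] at hx
    rcases lt_or_gt_of_ne hx.1 with hneg' | hpos
    · have : w (-(-x)) = -(w (-x)) := hw.1 (-x)
      rw [neg_neg] at this
      rw [this, hneg (-x) (by omega) (by omega)]
      omega
    · exact hneg x (by omega) (by omega)
  -- negSet is everything
  have hns : negSet n w = Finset.Icc (1:ℤ) n := by
    rw [negSet, Finset.filter_true_of_mem]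
    intro i hi
    simp only [Finset.mem_Icc] at hi
    rw [hneg i hi.1 hi.2]
    omega
  have hnegcard : negB n w = n := by
    rw [negB, hns, Int.card_Icc]
    omega
  -- invSet is all increasing pairs
  have his : invSet n w = ((Dw n) ×ˢ (Dw n)).filter fun p => p.1 < p.2 := by
    apply Finset.ext
    intro p
    simp only [invSet, Finset.mem_filter, Finset.mem_product]
    constructor
    · rintro ⟨h1, h2, _⟩
      exact ⟨h1, h2⟩
    · rintro ⟨⟨h1, h2⟩, h3⟩
      refine ⟨⟨h1, h2⟩, h3, ?_⟩
      rw [hval _ h1, hval _ h2]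
      omega
  -- counting
  set DD := (Dw n) ×ˢ (Dw n) with hDD
  have hsplit1 := Finset.card_filter_add_card_filter_not
    (s := DD) (p := fun p : ℤ × ℤ => p.1 < p.2)
  have hsplit2 := Finset.card_filter_add_card_filter_not
    (s := DD.filter fun p : ℤ × ℤ => ¬ p.1 < p.2) (p := fun p : ℤ × ℤ => p.2 < p.1)
  have hgt : ((DD.filter fun p : ℤ × ℤ => ¬ p.1 < p.2).filter fun p : ℤ × ℤ => p.2 < p.1).card
      = (DD.filter fun p : ℤ × ℤ => p.1 < p.2).card := by
    apply Finset.card_nbij' (i := fun p => (p.2, p.1)) (j := fun p => (p.2, p.1))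
    · intro p hp
      simp only [Finset.coe_filter, Finset.mem_product, Set.mem_setOf_eq, Finset.mem_coe,
        Finset.mem_filter, hDD] at hp ⊢
      exact ⟨⟨hp.1.1.2, hp.1.1.1⟩, hp.2⟩
    · intro p hp
      simp only [Finset.coe_filter, Finset.mem_product, Set.mem_setOf_eq, Finset.mem_coe,
        Finset.mem_filter, hDD] at hp ⊢
      exact ⟨⟨⟨hp.1.2, hp.1.1⟩, by omega⟩, hp.2⟩
    · intro p _; simp
    · intro p _; simp
  have heq : ((DD.filter fun p : ℤ × ℤ => ¬ p.1 < p.2).filter fun p : ℤ × ℤ => ¬ p.2 < p.1)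
      = (Dw n).image (fun x => (x, x)) := by
    apply Finset.ext
    intro p
    simp only [Finset.mem_filter, Finset.mem_product, Finset.mem_image, hDD]
    constructor
    · rintro ⟨⟨⟨h1, h2⟩, h3⟩, h4⟩
      exact ⟨p.1, h1, by rw [Prod.ext_iff]; constructor <;> simp <;> omega⟩
    · rintro ⟨x, hx, rfl⟩
      exact ⟨⟨⟨hx, hx⟩, by omega⟩, by omega⟩
  have heqcard : ((DD.filter fun p : ℤ × ℤ => ¬ p.1 < p.2).filter
      fun p : ℤ × ℤ => ¬ p.2 < p.1).card = 2 * n := by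
    rw [heq, Finset.card_image_of_injective _ (fun a b h => by simpa [Prod.ext_iff] using h),
      card_Dw]
  have hDDcard : DD.card = (2 * n) * (2 * n) := by
    rw [hDD, Finset.card_product, card_Dw]
  have : LB n w = ((DD.filter fun p : ℤ × ℤ => p.1 < p.2).card : ℤ) + n := by
    rw [LB, his, hnegcard]
  rw [this]
  push_cast at hsplit1 hsplit2 hgt heqcard hDDcard ⊢
  nlinarith [hsplit1, hsplit2, hgt, heqcard, hDDcard]

def eo (k : ℤ) : ℤ → ℚ := fun x => if x = k then 1 else if x = -k then -1 else 0

def OddFn (f : ℤ → ℚ) : Prop := ∀ x, f (-x) = -f x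

lemma eo_odd {k : ℤ} (hk : k ≠ 0) : OddFn (eo k) := by
  intro x
  simp only [eo]
  split_ifs <;> (try norm_num) <;> omega

lemma eo_indep (n : ℕ) : LinearIndependent ℚ (fun k : Fin n => eo ((k : ℤ) + 1)) := by
  classical
  have h : LinearIndependent ℚ (fun k : Fin n => (Pi.single k 1 : Fin n → ℚ)) := by
    have hb := (Pi.basisFun ℚ (Fin n)).linearIndependent
    have hfun : ⇑(Pi.basisFun ℚ (Fin n)) = fun k : Fin n => (Pi.single k 1 : Fin n → ℚ) := by
      funext k
      simp [Pi.basisFun_apply]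
    rwa [hfun] at hb
  apply LinearIndependent.of_comp (LinearMap.funLeft ℚ ℚ (fun j : Fin n => ((j : ℤ) + 1)))
  convert h using 1
  funext k j
  simp only [Function.comp_apply, LinearMap.funLeft_apply, eo, Pi.single_apply]
  have h1 : ((j : ℤ) + 1 = (k : ℤ) + 1) ↔ (j = k) := by
    constructor
    · intro hh; exact Fin.ext (by omega)
    · intro hh; rw [hh]
  have h2 : ¬ ((j : ℤ) + 1 = -((k : ℤ) + 1)) := by omega
  rw [if_neg h2]
  by_cases hjk : j = k
  · rw [if_pos (h1.mpr hjk), if_pos hjk]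
  · rw [if_neg (fun hh => hjk (h1.mp hh)), if_neg hjk]


lemma refl_mem {n : ℕ} {t : Perm ℤ} {d : ℤ} (h : BReflDepth n t d) : IsSignedPerm n t := by
  rcases h with ⟨a, b, h1, h2, h3, ht, hd⟩ | ⟨a, b, h1, h2, h3, ht, hd⟩ | ⟨a, h1, h2, ht, hd⟩
  · rw [ht, sp_def]; exact sp_mem h1 h2 h3
  · rw [ht, sm_def]; exact sm_mem h1 h2 h3
  · rw [ht, s0_def]; exact s0_mem h1 h2

lemma refl_chi {n : ℕ} {t : Perm ℤ} {d : ℤ} (h : BReflDepth n t d) :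
    ∃ χ : ℤ → ℚ, ∀ f : ℤ → ℚ, OddFn f → ∃ c : ℚ, (fun x => f (t x)) - f = c • χ := by
  rcases h with ⟨a, b, h1, h2, h3, ht, hd⟩ | ⟨a, b, h1, h2, h3, ht, hd⟩ | ⟨a, h1, h2, ht, hd⟩
  · refine ⟨eo a - eo b, fun f hf => ⟨f b - f a, ?_⟩⟩
    funext x
    have ha' := hf a
    have hb' := hf b
    simp only [Pi.sub_apply, Pi.smul_apply, smul_eq_mul, ht, sp_def,
      sp_apply h1 h2, eo]
    split_ifs <;> (try omega) <;> subst_vars <;> ring_nf <;> linarith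
  · refine ⟨eo a + eo b, fun f hf => ⟨-(f a + f b), ?_⟩⟩
    funext x
    have ha' := hf a
    have hb' := hf b
    simp only [Pi.add_apply, Pi.sub_apply, Pi.smul_apply, smul_eq_mul, ht, sm_def,
      sm_apply h1 h2, eo]
    split_ifs <;> (try omega) <;> subst_vars <;> ring_nf <;> linarith
  · refine ⟨eo a, fun f hf => ⟨-2 * f a, ?_⟩⟩
    funext x
    have ha' := hf a
    simp only [Pi.sub_apply, Pi.smul_apply, smul_eq_mul, ht, s0_def,
      s0_apply h1, eo]
    split_ifs <;> (try omega) <;> subst_vars <;> ring_nf <;> linarith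

lemma odd_comp {n : ℕ} {w : Perm ℤ} (hw : IsSignedPerm n w) {f : ℤ → ℚ} (hf : OddFn f) :
    OddFn (fun x => f (w x)) := by
  intro x
  simp only [hw.1 x, hf (w x)]

lemma span_master {n : ℕ} : ∀ L : List (Perm ℤ × ℤ), (∀ p ∈ L, BReflDepth n p.1 p.2) →
    ∃ s : Finset (ℤ → ℚ), s.card ≤ L.length ∧ ∀ f : ℤ → ℚ, OddFn f →
      ((fun x => f (((L.map Prod.fst).prod) x)) - f) ∈ Submodule.span ℚ (s : Set (ℤ → ℚ)) := by
  classical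
  intro L
  induction L with
  | nil =>
    intro _
    refine ⟨∅, le_refl _, fun f hf => ?_⟩
    simp only [List.map_nil, List.prod_nil, Equiv.Perm.one_apply]
    have : (fun x => f x) - f = 0 := by funext x; simp
    rw [this]
    exact Submodule.zero_mem _
  | cons p L ih =>
    intro hL
    obtain ⟨s, hs, hspan⟩ := ih (fun q hq => hL q (List.mem_cons_of_mem p hq))
    obtain ⟨χ, hχ⟩ := refl_chi (hL p List.mem_cons_self)
    refine ⟨insert χ s, (Finset.card_insert_le _ _).trans (by simp only [List.length_cons]; omega), fun f hf => ?_⟩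
    have hsub : (s : Set (ℤ → ℚ)) ⊆ (insert χ s : Finset (ℤ → ℚ)) := by
      intro x hx; simp only [Finset.coe_insert, Set.mem_insert_iff, Finset.mem_coe] at *
      exact Or.inr hx
    set t := p.1
    set P := (L.map Prod.fst).prod
    have htsp : IsSignedPerm n t := refl_mem (hL p List.mem_cons_self)
    have hg : OddFn (fun x => f (t x)) := odd_comp htsp hf
    obtain ⟨c, hc⟩ := hχ f hf
    have key : (fun x => f (((p :: L).map Prod.fst).prod x)) - f
        = ((fun x => (fun y => f (t y)) (P x)) - (fun y => f (t y))) + (c • χ) := by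
      rw [← hc]
      funext x
      simp only [List.map_cons, List.prod_cons, Pi.add_apply, Pi.sub_apply,
        Equiv.Perm.mul_apply]
      ring
    rw [key]
    exact Submodule.add_mem _
      (Submodule.span_mono hsub (hspan _ hg))
      (Submodule.smul_mem _ c (Submodule.subset_span (by simp)))

lemma length_ge {n : ℕ} {L : List (Perm ℤ × ℤ)} (hL : ∀ p ∈ L, BReflDepth n p.1 p.2)
    (hw : IsSignedPerm n (L.map Prod.fst).prod)
    (hprod : ∀ i : ℤ, 1 ≤ i → i ≤ (n:ℤ) → (L.map Prod.fst).prod i = -i) :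
    n ≤ L.length := by
  classical
  set w := (L.map Prod.fst).prod with hwdef
  obtain ⟨s, hs, hspan⟩ := span_master L hL
  have hval : ∀ x : ℤ, -(n:ℤ) ≤ x → x ≤ n → w x = -x := by
    intro x hx1 hx2
    rcases lt_trichotomy x 0 with hx | hx | hx
    · have : w (-(-x)) = -(w (-x)) := hw.1 (-x)
      rw [neg_neg] at this
      rw [this, hprod (-x) (by omega) (by omega)]
      omega
    · subst hx
      have h0 := hw.1 0
      simp only [neg_zero] at h0
      omega
    · exact hprod x (by omega) (by omega)
  have hmem : ∀ k : Fin n, eo ((k:ℤ)+1) ∈ Submodule.span ℚ (s : Set (ℤ → ℚ)) := by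
    intro k
    have hk0 : ((k:ℤ)+1) ≠ 0 := by omega
    have hodd := eo_odd hk0
    have hkey : (fun x => eo ((k:ℤ)+1) (w x)) - eo ((k:ℤ)+1)
        = (-2 : ℚ) • eo ((k:ℤ)+1) := by
      funext x
      simp only [Pi.sub_apply, Pi.smul_apply, smul_eq_mul]
      by_cases hx : -(n:ℤ) ≤ x ∧ x ≤ n
      · rw [hval x hx.1 hx.2, hodd x]; ring
      · have hfix : w x = x := hw.2 x (by rcases abs_cases x with ⟨e,_⟩|⟨e,_⟩ <;> omega)
        have : eo ((k:ℤ)+1) x = 0 := by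
          have hk : (k:ℤ) + 1 ≤ n := by omega
          simp only [eo]
          split_ifs <;> (try omega) <;> norm_num
        rw [hfix, this]; ring
    have h2 := hspan _ hodd
    rw [hkey] at h2
    have := Submodule.smul_mem (Submodule.span ℚ (s : Set (ℤ → ℚ))) (-1/2 : ℚ) h2
    rwa [smul_smul, show ((-1/2 : ℚ) * (-2)) = 1 by norm_num, one_smul] at this
  -- linear independence
  haveI : FiniteDimensional ℚ (Submodule.span ℚ (s : Set (ℤ → ℚ))) :=
    FiniteDimensional.span_of_finite ℚ (Finset.finite_toSet s)
  have hindep := eo_indep n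
  let E : Fin n → (Submodule.span ℚ (s : Set (ℤ → ℚ))) := fun k => ⟨eo ((k:ℤ)+1), hmem k⟩
  have hE : LinearIndependent ℚ E := by
    apply LinearIndependent.of_comp (Submodule.span ℚ (s : Set (ℤ → ℚ))).subtype
    convert hindep using 1
    rfl
  have hcard := hE.fintype_card_le_finrank
  have hrk : Module.finrank ℚ (Submodule.span ℚ (s : Set (ℤ → ℚ))) ≤ s.card :=
    finrank_span_finset_le_card s
  simp only [Fintype.card_fin] at hcard
  omega

lemma sp_def' (i j : ℤ) : Equiv.swap i j * Equiv.swap (-i) (-j) = sp i j := rfl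
lemma s0_def' (i : ℤ) : Equiv.swap (-i) i = s0 i := rfl
lemma sm_def' (i j : ℤ) : Equiv.swap (-i) j * Equiv.swap i (-j) = sm i j := rfl

def nuCond (k : ℕ) (a x : ℤ) : Prop :=
  ((1 ≤ x ∧ x ≤ (k:ℤ)) ∨ (-(k:ℤ) ≤ x ∧ x ≤ -1)) ∧ x ≠ a ∧ x ≠ -a

instance (k : ℕ) (a x : ℤ) : Decidable (nuCond k a x) := by unfold nuCond; infer_instance

lemma nu_invol (k : ℕ) (a : ℤ) :
    Function.Involutive (fun x : ℤ => if nuCond k a x then -x else x) := by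
  intro x
  dsimp only
  by_cases h : nuCond k a x
  · rw [if_pos h, if_pos (by unfold nuCond at *; omega)]
    omega
  · rw [if_neg h, if_neg h]

def nu (k : ℕ) (a : ℤ) : Perm ℤ := (nu_invol k a).toPerm _

lemma nu_apply (k : ℕ) (a x : ℤ) : nu k a x = if nuCond k a x then -x else x := rfl

lemma Tsucc (n : ℕ) : (((n+1+1).choose 2 : ℕ) : ℤ) = ((n+1).choose 2 : ℕ) + (n+1) := by
  rw [Nat.choose_succ_succ (n+1) 1, Nat.choose_one_right]
  push_cast
  ring

lemma nu_list (n : ℕ) : ∀ (k : ℕ) (a : ℤ), 0 ≤ a → k ≤ n →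
    ∃ L : List (Perm ℤ × ℤ), (∀ p ∈ L, BReflDepth n p.1 p.2) ∧
      (L.map Prod.fst).prod = nu k a ∧
      (L.map Prod.snd).sum = ((k+1).choose 2 : ℕ) - (if 1 ≤ a ∧ a ≤ (k:ℤ) then a else 0) := by
  intro k
  induction k with
  | zero =>
    intro a ha _
    refine ⟨[], by simp, ?_, by simp; omega⟩
    simp only [List.map_nil, List.prod_nil]
    ext x
    simp only [nu_apply, Equiv.Perm.one_apply, nuCond]
    split_ifs <;> omega
  | succ m ih =>
    intro a ha hkn
    by_cases hma : a = (m:ℤ) + 1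
    · obtain ⟨L, hL1, hL2, hL3⟩ := ih a ha (by omega)
      refine ⟨L, hL1, ?_, ?_⟩
      · rw [hL2]
        ext x
        simp only [nu_apply, nuCond]
        split_ifs <;> (try push_cast at *) <;> omega
      · rw [hL3, Tsucc]
        push_cast at *
        split_ifs <;> omega
    · obtain ⟨L, hL1, hL2, hL3⟩ := ih a ha (by omega)
      refine ⟨L ++ [(s0 ((m:ℤ)+1), (m:ℤ)+1)], ?_, ?_, ?_⟩
      · intro p hp
        rcases List.mem_append.mp hp with h | h
        · exact hL1 p h
        · simp only [List.mem_singleton] at h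
          subst h
          exact Or.inr (Or.inr ⟨(m:ℤ)+1, by omega, by push_cast; omega, (s0_def' _).symm, rfl⟩)
      · simp only [List.map_append, List.prod_append, hL2, List.map_cons, List.map_nil,
          List.prod_cons, List.prod_nil, mul_one]
        ext x
        simp only [Equiv.Perm.mul_apply, nu_apply, nuCond, s0_apply (by omega : (1:ℤ) ≤ (m:ℤ)+1)]
        split_ifs <;> (try push_cast at *) <;> omega
      · simp only [List.map_append, List.sum_append, hL3, List.map_cons, List.map_nil,
          List.sum_cons, List.sum_nil, add_zero, Tsucc]
        push_cast at *
        split_ifs <;> omega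

lemma isp_zero' {n : ℕ} {w : Perm ℤ} (hw : IsSignedPerm n w) : w 0 = 0 := by
  have := hw.1 0
  simp only [neg_zero] at this
  omega

lemma isp_shrink {n : ℕ} {w : Perm ℤ} (hw : IsSignedPerm (n+1) w)
    (hfix : w ((n:ℤ)+1) = (n:ℤ)+1) : IsSignedPerm n w := by
  refine ⟨hw.1, fun i hi => ?_⟩
  have hi' : i < -(n:ℤ) ∨ (n:ℤ) < i := by rcases abs_cases i with ⟨h1,_⟩|⟨h1,_⟩ <;> omega
  by_cases h : i = (n:ℤ)+1
  · rw [h]; exact hfix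
  · by_cases h' : i = -((n:ℤ)+1)
    · rw [h']
      have := hw.1 ((n:ℤ)+1)
      rw [hfix] at this
      exact this
    · exact hw.2 i (by
        rcases abs_cases i with ⟨h1,_⟩|⟨h1,_⟩ <;> push_cast <;> omega)

lemma lift_refl {n : ℕ} {t : Perm ℤ} {d : ℤ} (h : BReflDepth n t d) : BReflDepth (n+1) t d := by
  rcases h with ⟨i,j,h1,h2,h3,ht,hd⟩|⟨i,j,h1,h2,h3,ht,hd⟩|⟨i,h1,h2,ht,hd⟩
  · exact Or.inl ⟨i,j,h1,h2,by push_cast; omega,ht,hd⟩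
  · exact Or.inr (Or.inl ⟨i,j,h1,h2,by push_cast; omega,ht,hd⟩)
  · exact Or.inr (Or.inr ⟨i,h1,by push_cast; omega,ht,hd⟩)

set_option maxHeartbeats 3000000 in
lemma depth_upper : ∀ (n : ℕ) (w : Perm ℤ), IsSignedPerm n w →
    (∃ L : List (Perm ℤ × ℤ), (∀ p ∈ L, BReflDepth n p.1 p.2) ∧ (L.map Prod.fst).prod = w ∧
      (L.map Prod.snd).sum ≤ (((n+1).choose 2 : ℕ) : ℤ)) ∧
    ((¬ ∀ i : ℤ, 1 ≤ i → i ≤ (n:ℤ) → w i = -i) →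
      ∃ L : List (Perm ℤ × ℤ), (∀ p ∈ L, BReflDepth n p.1 p.2) ∧ (L.map Prod.fst).prod = w ∧
      (L.map Prod.snd).sum ≤ (((n+1).choose 2 : ℕ) : ℤ) - 1) := by
  intro n
  induction n with
  | zero =>
    intro w hw
    have hid : w = 1 := by
      ext x
      simp only [Equiv.Perm.one_apply]
      rcases lt_trichotomy x 0 with h|h|h
      · exact hw.2 x (by rcases abs_cases x with ⟨e,_⟩|⟨e,_⟩ <;> push_cast <;> omega)
      · rw [h]; exact isp_zero' hw
      · exact hw.2 x (by rcases abs_cases x with ⟨e,_⟩|⟨e,_⟩ <;> push_cast <;> omega)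
    refine ⟨⟨[], by simp, by simp [hid], by simp⟩, fun hcon => ?_⟩
    exact (hcon (fun i h1 h2 => by exfalso; push_cast at h2; omega)).elim
  | succ n ih =>
    intro w hw
    have hT := Tsucc n
    set N : ℤ := (n:ℤ) + 1 with hNdef
    have hNcast : ((n+1 : ℕ) : ℤ) = N := by push_cast; omega
    set q := w.symm N with hqdef
    have hq : w q = N := w.apply_symm_apply N
    have hq0 : q ≠ 0 := by
      intro h
      rw [h, isp_zero' hw] at hq
      omega
    have hqle : -N ≤ q ∧ q ≤ N := by
      by_contra hcon
      have : w q = q := hw.2 q (by rcases abs_cases q with ⟨e,_⟩|⟨e,_⟩ <;> push_cast <;> omega)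
      omega
    by_cases hqN : q = N
    · -- case A : w fixes N
      have hfix : w N = N := by rw [hqN] at hq; exact hq
      have hwn : IsSignedPerm n w := isp_shrink hw hfix
      obtain ⟨⟨L, hL1, hL2, hL3⟩, -⟩ := ih w hwn
      exact ⟨⟨L, fun p hp => lift_refl (hL1 p hp), hL2, by omega⟩,
        fun _ => ⟨L, fun p hp => lift_refl (hL1 p hp), hL2, by omega⟩⟩
    · by_cases hqNeg : q = -N
      · -- case C : w N = -N
        have hs0mem : IsSignedPerm (n+1) (s0 N) := s0_mem (by omega) (by push_cast; omega)
        set w' := w * s0 N with hw'def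
        have hw'N : w' N = N := by
          rw [hw'def, Equiv.Perm.mul_apply, s0_apply (by omega : (1:ℤ) ≤ N), if_pos rfl,
            ← hqNeg]
          exact hq
        have hw'sp : IsSignedPerm n w' := isp_shrink (isp_mul hw hs0mem) hw'N
        have hback : w = w' * s0 N := by
          rw [hw'def, mul_assoc, s0_mul_self, mul_one]
        obtain ⟨⟨L, hL1, hL2, hL3⟩, hstrict⟩ := ih w' hw'sp
        have hrefl : BReflDepth (n+1) (s0 N) N :=
          Or.inr (Or.inr ⟨N, by omega, by push_cast; omega, (s0_def' N).symm, rfl⟩)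
        have hmk : ∀ (L' : List (Perm ℤ × ℤ)), (∀ p ∈ L', BReflDepth n p.1 p.2) →
            (L'.map Prod.fst).prod = w' →
            (∀ p ∈ (L' ++ [(s0 N, N)]), BReflDepth (n+1) p.1 p.2) ∧
            ((L' ++ [(s0 N, N)]).map Prod.fst).prod = w ∧
            ((L' ++ [(s0 N, N)]).map Prod.snd).sum = (L'.map Prod.snd).sum + N := by
          intro L' h1 h2
          refine ⟨?_, ?_, ?_⟩
          · intro p hp
            rcases List.mem_append.mp hp with h | h
            · exact lift_refl (h1 p h)
            · simp only [List.mem_singleton] at h; subst h; exact hrefl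
          · simp only [List.map_append, List.prod_append, h2, List.map_cons, List.map_nil,
              List.prod_cons, List.prod_nil, mul_one, hback]
          · simp only [List.map_append, List.sum_append, List.map_cons, List.map_nil,
              List.sum_cons, List.sum_nil, add_zero]
        refine ⟨⟨L ++ [(s0 N, N)], (hmk L hL1 hL2).1, (hmk L hL1 hL2).2.1, ?_⟩, fun hcon => ?_⟩
        · rw [(hmk L hL1 hL2).2.2]; omega
        · have hcon' : ¬ ∀ i : ℤ, 1 ≤ i → i ≤ (n:ℤ) → w' i = -i := by
            intro hcond
            apply hcon
            intro i h1 h2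
            rw [hNcast] at h2
            by_cases hi : i ≤ (n:ℤ)
            · rw [hback, Equiv.Perm.mul_apply, s0_apply (by omega : (1:ℤ) ≤ N),
                if_neg (by omega), if_neg (by omega)]
              exact hcond i h1 hi
            · have hiN : i = N := by omega
              rw [hiN, hback, Equiv.Perm.mul_apply, s0_apply (by omega : (1:ℤ) ≤ N),
                if_pos rfl]
              have hodd := hw'sp.1 N
              rw [hw'N] at hodd
              rw [hodd]
          obtain ⟨L', h1, h2, h3⟩ := hstrict hcon'
          exact ⟨L' ++ [(s0 N, N)], (hmk L' h1 h2).1, (hmk L' h1 h2).2.1,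
            by rw [(hmk L' h1 h2).2.2]; omega⟩
      · by_cases hqpos : 1 ≤ q
        · -- case B : value N sits at positive position q < N
          have hqltN : q < N := by omega
          have hspmem : IsSignedPerm (n+1) (sp q N) := sp_mem hqpos hqltN (by push_cast; omega)
          set w' := w * sp q N with hw'def
          have hw'N : w' N = N := by
            rw [hw'def, Equiv.Perm.mul_apply, sp_apply hqpos hqltN,
              if_neg (by omega), if_pos rfl]
            exact hq
          have hw'sp : IsSignedPerm n w' := isp_shrink (isp_mul hw hspmem) hw'N
          have hback : w = w' * sp q N := by
            rw [hw'def, mul_assoc, sp_mul_self hqpos hqltN, mul_one]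
          obtain ⟨⟨L, hL1, hL2, hL3⟩, -⟩ := ih w' hw'sp
          have hrefl : BReflDepth (n+1) (sp q N) (N - q) :=
            Or.inl ⟨q, N, hqpos, hqltN, by push_cast; omega, (sp_def' q N).symm, rfl⟩
          have hprops : ∀ p ∈ (L ++ [(sp q N, N - q)]), BReflDepth (n+1) p.1 p.2 := by
            intro p hp
            rcases List.mem_append.mp hp with h | h
            · exact lift_refl (hL1 p h)
            · simp only [List.mem_singleton] at h; subst h; exact hrefl
          have hprod : ((L ++ [(sp q N, N - q)]).map Prod.fst).prod = w := by
            simp only [List.map_append, List.prod_append, hL2, List.map_cons, List.map_nil,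
              List.prod_cons, List.prod_nil, mul_one, hback]
          have hsum : ((L ++ [(sp q N, N - q)]).map Prod.snd).sum
              = (L.map Prod.snd).sum + (N - q) := by
            simp only [List.map_append, List.sum_append, List.map_cons, List.map_nil,
              List.sum_cons, List.sum_nil, add_zero]
          exact ⟨⟨_, hprops, hprod, by rw [hsum]; omega⟩,
            fun _ => ⟨_, hprops, hprod, by rw [hsum]; omega⟩⟩
        · -- case D : value N sits at negative position -a, 1 ≤ a ≤ n
          set a : ℤ := -q with hadef
          have ha1 : 1 ≤ a := by omega
          have ha2 : a ≤ (n:ℤ) := by omega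
          have haN : a < N := by omega
          have hs0mem : IsSignedPerm (n+1) (s0 a) := s0_mem ha1 (by push_cast; omega)
          have hspmem : IsSignedPerm (n+1) (sp a N) := sp_mem ha1 haN (by push_cast; omega)
          set w' := w * s0 a * sp a N with hw'def
          have hw'N : w' N = N := by
            rw [hw'def, Equiv.Perm.mul_apply, Equiv.Perm.mul_apply,
              sp_apply ha1 haN, if_neg (by omega), if_pos rfl,
              s0_apply ha1, if_pos rfl]
            have : -a = q := by omega
            rw [this]
            exact hq
          have hw'sp : IsSignedPerm n w' := isp_shrink (isp_mul (isp_mul hw hs0mem) hspmem) hw'N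
          have hback : w = w' * sp a N * s0 a := by
            rw [hw'def, mul_assoc (w * s0 a), sp_mul_self ha1 haN, mul_one,
              mul_assoc, s0_mul_self, mul_one]
          obtain ⟨⟨L, hL1, hL2, hL3⟩, hstrict⟩ := ih w' hw'sp
          have hrefl2 : BReflDepth (n+1) (sp a N) (N - a) :=
            Or.inl ⟨a, N, ha1, haN, by push_cast; omega, (sp_def' a N).symm, rfl⟩
          have hrefl1 : BReflDepth (n+1) (s0 a) a :=
            Or.inr (Or.inr ⟨a, ha1, by push_cast; omega, (s0_def' a).symm, rfl⟩)
          have hmk : ∀ (L' : List (Perm ℤ × ℤ)), (∀ p ∈ L', BReflDepth n p.1 p.2) →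
              (L'.map Prod.fst).prod = w' →
              (∀ p ∈ (L' ++ [(sp a N, N - a), (s0 a, a)]), BReflDepth (n+1) p.1 p.2) ∧
              ((L' ++ [(sp a N, N - a), (s0 a, a)]).map Prod.fst).prod = w ∧
              ((L' ++ [(sp a N, N - a), (s0 a, a)]).map Prod.snd).sum
                = (L'.map Prod.snd).sum + N := by
            intro L' h1 h2
            refine ⟨?_, ?_, ?_⟩
            · intro p hp
              rcases List.mem_append.mp hp with h | h
              · exact lift_refl (h1 p h)
              · simp only [List.mem_cons, List.mem_singleton, List.not_mem_nil, or_false] at h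
                rcases h with h | h <;> subst h
                · exact hrefl2
                · exact hrefl1
            · simp only [List.map_append, List.prod_append, h2, List.map_cons, List.map_nil,
                List.prod_cons, List.prod_nil, mul_one, hback, mul_assoc]
            · simp only [List.map_append, List.sum_append, List.map_cons, List.map_nil,
                List.sum_cons, List.sum_nil, add_zero]
              ring
          refine ⟨⟨L ++ [(sp a N, N - a), (s0 a, a)], (hmk L hL1 hL2).1, (hmk L hL1 hL2).2.1,
            by rw [(hmk L hL1 hL2).2.2]; omega⟩, fun hcon => ?_⟩
          by_cases hcond : ∀ i : ℤ, 1 ≤ i → i ≤ (n:ℤ) → w' i = -i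
          · -- the exceptional strict case
            have hw'val : ∀ y : ℤ, w' y
                = if (1 ≤ y ∧ y ≤ (n:ℤ)) ∨ (-(n:ℤ) ≤ y ∧ y ≤ -1) then -y else y := by
              intro y
              split_ifs with h
              · rcases h with ⟨h1, h2⟩ | ⟨h1, h2⟩
                · exact hcond y h1 h2
                · have hodd := hw'sp.1 (-y)
                  rw [neg_neg] at hodd
                  rw [hodd, hcond (-y) (by omega) (by omega)]
                  omega
              · rcases lt_trichotomy y 0 with hy | hy | hy
                · exact hw'sp.2 y (by rcases abs_cases y with ⟨e,_⟩|⟨e,_⟩ <;> omega)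
                · rw [hy]; exact isp_zero' hw'sp
                · exact hw'sp.2 y (by rcases abs_cases y with ⟨e,_⟩|⟨e,_⟩ <;> omega)
            have hwid : w = sm a N * nu n a := by
              ext x
              have hval : w x = w' (sp a N (s0 a x)) := by rw [hback]; rfl
              rw [Equiv.Perm.mul_apply, hval, hw'val, sp_apply ha1 haN, s0_apply ha1,
                sm_apply ha1 haN, nu_apply]
              simp only [nuCond]
              split_ifs <;> omega
            obtain ⟨Lnu, hnu1, hnu2, hnu3⟩ := nu_list (n+1) n a (by omega) (by omega)
            rw [if_pos ⟨ha1, ha2⟩] at hnu3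
            have hreflsm : BReflDepth (n+1) (sm a N) (a + N - 1) :=
              Or.inr (Or.inl ⟨a, N, ha1, haN, by push_cast; omega, (sm_def' a N).symm, rfl⟩)
            refine ⟨(sm a N, a + N - 1) :: Lnu, ?_, ?_, ?_⟩
            · intro p hp
              rcases List.mem_cons.mp hp with h | h
              · subst h; exact hreflsm
              · exact hnu1 p h
            · simp only [List.map_cons, List.prod_cons, hnu2, hwid]
            · simp only [List.map_cons, List.sum_cons, hnu3]
              omega
          · obtain ⟨L', h1, h2, h3⟩ := hstrict hcond
            exact ⟨L' ++ [(sp a N, N - a), (s0 a, a)], (hmk L' h1 h2).1, (hmk L' h1 h2).2.1,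
              by rw [(hmk L' h1 h2).2.2]; omega⟩


lemma two_choose (k : ℕ) : 2 * ((k+1).choose 2) = k * (k+1) := by
  induction k with
  | zero => rfl
  | succ m ih =>
    rw [Nat.choose_succ_succ (m+1) 1, Nat.choose_one_right, Nat.mul_add, ih]
    ring

lemma sum_nonneg' {n : ℕ} {L : List (Equiv.Perm ℤ × ℤ)}
    (hL : ∀ p ∈ L, BReflDepth n p.1 p.2) : 0 ≤ (L.map Prod.snd).sum := by
  induction L with
  | nil => simp
  | cons p L ih =>
    simp only [List.map_cons, List.sum_cons]
    have h1 := (refl_props (hL p List.mem_cons_self)).2.2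
    have h2 := ih (fun q hq => hL q (List.mem_cons_of_mem p hq))
    omega

lemma depth_lower {n : ℕ} {w : Equiv.Perm ℤ} (hw : IsSignedPerm n w)
    (hneg : ∀ i : ℤ, 1 ≤ i → i ≤ (n:ℤ) → w i = -i) {L : List (Equiv.Perm ℤ × ℤ)}
    (hL : ∀ p ∈ L, BReflDepth n p.1 p.2) (hprod : (L.map Prod.fst).prod = w) :
    (((n+1).choose 2 : ℕ) : ℤ) ≤ (L.map Prod.snd).sum := by
  have h1 := (list_LB L hL).2
  rw [hprod] at h1
  have h2 := LB_w0 hw hneg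
  have h3 : n ≤ L.length := length_ge hL (by rw [hprod]; exact hw) (by rw [hprod]; exact hneg)
  have h4 := two_choose n
  have h3' : (n : ℤ) ≤ (L.length : ℤ) := by exact_mod_cast h3
  have h4' : 2 * (((n+1).choose 2 : ℕ) : ℤ) = (n:ℤ) * ((n:ℤ)+1) := by exact_mod_cast h4
  nlinarith [h1, h2, h3', h4']

/-- **Corollary (maximal depth in type B).** For every `w ∈ B_n`,
`dp(w) ≤ binom(n+1,2)`, with equality iff `w` is the negative identity `[−1, −2, …, −n]`. -/
theorem max_depth_B (n : ℕ) (w : Equiv.Perm ℤ) (hw : w ∈ BGroup n) :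
    depthB n w ≤ ((n + 1).choose 2 : ℤ) ∧
      (depthB n w = ((n + 1).choose 2 : ℤ) ↔
        ∀ i : ℤ, 1 ≤ i → i ≤ (n : ℤ) → w i = -i) := by
  have hw' : IsSignedPerm n w := hw
  obtain ⟨⟨L, hL1, hL2, hL3⟩, hstrict⟩ := depth_upper n w hw'
  have hbdd : BddBelow {m : ℤ | ∃ L : List (Equiv.Perm ℤ × ℤ),
      (∀ p ∈ L, BReflDepth n p.1 p.2) ∧ (L.map Prod.fst).prod = w ∧
      (L.map Prod.snd).sum = m} := by
    refine ⟨0, fun m hm => ?_⟩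
    obtain ⟨L', h1, _, h3⟩ := hm
    rw [← h3]
    exact sum_nonneg' h1
  have hne : Set.Nonempty {m : ℤ | ∃ L : List (Equiv.Perm ℤ × ℤ),
      (∀ p ∈ L, BReflDepth n p.1 p.2) ∧ (L.map Prod.fst).prod = w ∧
      (L.map Prod.snd).sum = m} := ⟨_, L, hL1, hL2, rfl⟩
  have hle : depthB n w ≤ ((n + 1).choose 2 : ℤ) :=
    le_trans (csInf_le hbdd ⟨L, hL1, hL2, rfl⟩) hL3
  refine ⟨hle, ?_, ?_⟩
  · intro heq
    by_contra hcon
    obtain ⟨L', h1, h2, h3⟩ := hstrict hcon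
    have : depthB n w ≤ (((n+1).choose 2 : ℕ) : ℤ) - 1 :=
      le_trans (csInf_le hbdd ⟨L', h1, h2, rfl⟩) h3
    rw [heq] at this
    omega
  · intro hcond
    have hge : (((n+1).choose 2 : ℕ) : ℤ) ≤ depthB n w := by
      apply le_csInf hne
      rintro m ⟨L', h1, h2, h3⟩
      rw [← h3]
      exact depth_lower hw' hcond h1 h2
    omega
end

section
/- Let v, w ∈ D_n, let t be a reflection of D_n, and suppose w = vt. Then ℓ_S(w) = ℓ_S(v) + ℓ_S(t) if and only if one of the following holds: (1) t = t_{ij} with 1≤i<j≤n, w(i) > w(j), and for all k with i<k<j one has w(i) > w(k) > w(j); (2) t = t_{−i,j} with 1≤i<j≤n, w(i)+w(j) < 0, for all k with 1≤k<i one has w(k) > w(i) and w(k)+w(j) < 0, and for all k'≠i with 1≤k'<j one has w(i)+w(k') ≤ 0 and w(k') > w(j). -/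
open Equiv

section Aux
open Finset

def tA (i j : ℤ) : Equiv.Perm ℤ := Equiv.swap i j * Equiv.swap (-i) (-j)
def tB (i j : ℤ) : Equiv.Perm ℤ := Equiv.swap (-i) j * Equiv.swap i (-j)

noncomputable def Pairs (n : ℕ) : Finset (ℤ × ℤ) :=
  ((Finset.Icc (1:ℤ) (n:ℤ)) ×ˢ (Finset.Icc (1:ℤ) (n:ℤ))).filter (fun p => p.1 < p.2)

def fB (w : Equiv.Perm ℤ) (p : ℤ × ℤ) : ℤ :=
  (if w p.2 < w p.1 then 1 else 0) + (if w p.1 + w p.2 < 0 then 1 else 0)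

noncomputable def LD (n : ℕ) (w : Equiv.Perm ℤ) : ℤ := ∑ p ∈ Pairs n, fB w p

lemma mem_Pairs {n : ℕ} {p : ℤ × ℤ} :
    p ∈ Pairs n ↔ 1 ≤ p.1 ∧ p.1 ≤ (n:ℤ) ∧ 1 ≤ p.2 ∧ p.2 ≤ (n:ℤ) ∧ p.1 < p.2 := by
  simp [Pairs, Finset.mem_filter, Finset.mem_product, Finset.mem_Icc]; tauto

lemma tA_apply (i j : ℤ) (hi : 1 ≤ i) (hij : i < j) (x : ℤ) :
    tA i j x = if x = i then j else if x = j then i else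
      if x = -i then -j else if x = -j then -i else x := by
  simp only [tA, Equiv.Perm.mul_apply, Equiv.swap_apply_def]
  split_ifs <;> omega

lemma tB_apply (i j : ℤ) (hi : 1 ≤ i) (hij : i < j) (x : ℤ) :
    tB i j x = if x = i then -j else if x = j then -i else
      if x = -i then j else if x = -j then i else x := by
  simp only [tB, Equiv.Perm.mul_apply, Equiv.swap_apply_def]
  split_ifs <;> omega

lemma tA_sq (i j : ℤ) (hi : 1 ≤ i) (hij : i < j) : tA i j * tA i j = 1 := by
  ext x
  simp only [Equiv.Perm.mul_apply, Equiv.Perm.one_apply, tA_apply i j hi hij]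
  split_ifs <;> omega

lemma tB_sq (i j : ℤ) (hi : 1 ≤ i) (hij : i < j) : tB i j * tB i j = 1 := by
  ext x
  simp only [Equiv.Perm.mul_apply, Equiv.Perm.one_apply, tB_apply i j hi hij]
  split_ifs <;> omega

lemma tA_mem (n : ℕ) (i j : ℤ) (hi : 1 ≤ i) (hij : i < j) (hj : j ≤ (n:ℤ)) :
    tA i j ∈ BGroup n := by
  constructor
  · intro x; rw [tA_apply i j hi hij, tA_apply i j hi hij]; split_ifs <;> omega
  · intro x hx
    rw [lt_abs] at hx
    rw [tA_apply i j hi hij]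
    split_ifs <;> omega

lemma tB_mem (n : ℕ) (i j : ℤ) (hi : 1 ≤ i) (hij : i < j) (hj : j ≤ (n:ℤ)) :
    tB i j ∈ BGroup n := by
  constructor
  · intro x; rw [tB_apply i j hi hij, tB_apply i j hi hij]; split_ifs <;> omega
  · intro x hx
    rw [lt_abs] at hx
    rw [tB_apply i j hi hij]
    split_ifs <;> omega

end Aux
section Aux2
open Finset

variable {n : ℕ} {w : Equiv.Perm ℤ}

lemma w_neg (hw : w ∈ BGroup n) (x : ℤ) : w (-x) = -(w x) := hw.1 x

lemma w_zero (hw : w ∈ BGroup n) : w 0 = 0 := by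
  have := hw.1 0; rw [neg_zero] at this; omega

lemma w_ne (a b : ℤ) (h : a ≠ b) : w a ≠ w b := fun hc => h (w.injective hc)

lemma w_add_ne (hw : w ∈ BGroup n) {a b : ℤ} (ha : 1 ≤ a) (hb : 1 ≤ b) :
    w a + w b ≠ 0 := by
  intro hc
  have : w a = w (-b) := by rw [w_neg hw]; omega
  have := w.injective this
  omega

lemma w_abs_le (hw : w ∈ BGroup n) {k : ℤ} (hk1 : 1 ≤ k) (hk2 : k ≤ (n:ℤ)) :
    |w k| ≤ (n:ℤ) := by
  by_contra h
  push_neg at h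
  have h2 : w (w k) = w k := hw.2 (w k) h
  have := w.injective h2
  rw [this] at h
  have : |k| ≤ (n : ℤ) := abs_le.mpr ⟨by omega, hk2⟩
  omega

lemma w_pos_ne_zero (hw : w ∈ BGroup n) {k : ℤ} (hk : 1 ≤ k) : w k ≠ 0 := by
  intro hc
  have : w k = w 0 := by rw [w_zero hw, hc]
  have := w.injective this
  omega

/-- ordered pair constructor -/
def pr (a b : ℤ) : ℤ × ℤ := if a < b then (a, b) else (b, a)

lemma pr_lt {a b : ℤ} (h : a < b) : pr a b = (a, b) := if_pos h
lemma pr_gt {a b : ℤ} (h : b < a) : pr a b = (b, a) := if_neg (by omega)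

lemma sum_decomp (n : ℕ) (i j : ℤ) (hi : 1 ≤ i) (hij : i < j) (hj : j ≤ (n:ℤ))
    (d : ℤ × ℤ → ℤ)
    (hd : ∀ p ∈ Pairs n, p.1 ≠ i → p.1 ≠ j → p.2 ≠ i → p.2 ≠ j → d p = 0) :
    ∑ p ∈ Pairs n, d p =
      d (i, j) + ∑ k ∈ ((Finset.Icc (1:ℤ) (n:ℤ)).erase i).erase j, (d (pr k i) + d (pr k j)) := by
  classical
  set K := ((Finset.Icc (1:ℤ) (n:ℤ)).erase i).erase j with hK
  have hKmem : ∀ {k : ℤ}, k ∈ K ↔ (k ≠ j ∧ k ≠ i ∧ 1 ≤ k ∧ k ≤ (n:ℤ)) := by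
    intro k
    rw [hK]
    simp only [Finset.mem_erase, Finset.mem_Icc]
  -- restrict to touching pairs
  have h1 : ∑ p ∈ Pairs n, d p
      = ∑ p ∈ (Pairs n).filter (fun p => p.1 = i ∨ p.1 = j ∨ p.2 = i ∨ p.2 = j), d p := by
    rw [Finset.sum_filter_of_ne]
    intro p hp hne
    by_contra hc
    push_neg at hc
    exact hne (hd p hp hc.1 hc.2.1 hc.2.2.1 hc.2.2.2)
  rw [h1]
  have hset : (Pairs n).filter (fun p => p.1 = i ∨ p.1 = j ∨ p.2 = i ∨ p.2 = j)
      = insert (i, j) ((K.image (fun k => pr k i)) ∪ (K.image (fun k => pr k j))) := by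
    ext p
    simp only [Finset.mem_filter, Finset.mem_insert, Finset.mem_union, Finset.mem_image]
    constructor
    · rintro ⟨hp, hcase⟩
      rw [mem_Pairs] at hp
      obtain ⟨h11, h12, h21, h22, hlt⟩ := hp
      obtain ⟨p1, p2⟩ := p
      simp only at h11 h12 h21 h22 hlt hcase ⊢
      rcases hcase with h | h | h | h
      · subst h
        by_cases hj2 : p2 = j
        · left; rw [hj2]
        · right; left
          exact ⟨p2, hKmem.mpr ⟨hj2, by omega, by omega, h22⟩, by rw [pr_gt hlt]⟩
      · subst h
        right; right
        exact ⟨p2, hKmem.mpr ⟨by omega, by omega, by omega, h22⟩, by rw [pr_gt hlt]⟩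
      · subst h
        right; left
        exact ⟨p1, hKmem.mpr ⟨by omega, by omega, h11, by omega⟩, by rw [pr_lt hlt]⟩
      · subst h
        by_cases hi2 : p1 = i
        · left; rw [hi2]
        · right; right
          exact ⟨p1, hKmem.mpr ⟨by omega, hi2, h11, by omega⟩, by rw [pr_lt hlt]⟩
    · rintro (h | ⟨k, hk, hkp⟩ | ⟨k, hk, hkp⟩)
      · subst h
        exact ⟨mem_Pairs.mpr ⟨hi, by omega, by omega, hj, hij⟩, Or.inl rfl⟩
      · rw [hKmem] at hk
        rcases lt_or_gt_of_ne hk.2.1 with hlt | hlt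
        · rw [pr_lt hlt] at hkp; subst hkp
          exact ⟨mem_Pairs.mpr ⟨by omega, by omega, hi, by omega, hlt⟩, by tauto⟩
        · rw [pr_gt hlt] at hkp; subst hkp
          exact ⟨mem_Pairs.mpr ⟨hi, by omega, by omega, by omega, hlt⟩, by tauto⟩
      · rw [hKmem] at hk
        rcases lt_or_gt_of_ne hk.1 with hlt | hlt
        · rw [pr_lt hlt] at hkp; subst hkp
          exact ⟨mem_Pairs.mpr ⟨by omega, by omega, by omega, hj, hlt⟩, by tauto⟩
        · rw [pr_gt hlt] at hkp; subst hkp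
          exact ⟨mem_Pairs.mpr ⟨by omega, hj, by omega, by omega, hlt⟩, by tauto⟩
  rw [hset]
  have hnotmem : (i, j) ∉ (K.image (fun k => pr k i)) ∪ (K.image (fun k => pr k j)) := by
    simp only [Finset.mem_union, Finset.mem_image, not_or]
    constructor
    · rintro ⟨k, hk, hkp⟩
      rw [hKmem] at hk
      rcases lt_or_gt_of_ne hk.2.1 with hlt | hlt
      · rw [pr_lt hlt, Prod.mk.injEq] at hkp; omega
      · rw [pr_gt hlt, Prod.mk.injEq] at hkp; omega
    · rintro ⟨k, hk, hkp⟩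
      rw [hKmem] at hk
      rcases lt_or_gt_of_ne hk.1 with hlt | hlt
      · rw [pr_lt hlt, Prod.mk.injEq] at hkp; omega
      · rw [pr_gt hlt, Prod.mk.injEq] at hkp; omega
  rw [Finset.sum_insert hnotmem]
  congr 1
  have hdisj : Disjoint (K.image (fun k => pr k i)) (K.image (fun k => pr k j)) := by
    rw [Finset.disjoint_left]
    rintro p hp hq
    simp only [Finset.mem_image] at hp hq
    obtain ⟨k, hk, hkp⟩ := hp
    obtain ⟨k', hk', hkp'⟩ := hq
    rw [hKmem] at hk hk'
    have heq : pr k i = pr k' j := by rw [hkp, hkp']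
    rcases lt_or_gt_of_ne hk.2.1 with h1 | h1 <;> rcases lt_or_gt_of_ne hk'.1 with h2 | h2 <;>
      [rw [pr_lt h1, pr_lt h2] at heq; rw [pr_lt h1, pr_gt h2] at heq;
       rw [pr_gt h1, pr_lt h2] at heq; rw [pr_gt h1, pr_gt h2] at heq] <;>
      · rw [Prod.mk.injEq] at heq
        omega
  rw [Finset.sum_union hdisj]
  have hinji : Set.InjOn (fun k => pr k i) K := by
    intro a ha b hb hab
    rw [Finset.mem_coe, hKmem] at ha hb
    simp only at hab
    rcases lt_or_gt_of_ne ha.2.1 with h1 | h1 <;> rcases lt_or_gt_of_ne hb.2.1 with h2 | h2 <;>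
      [rw [pr_lt h1, pr_lt h2] at hab; rw [pr_lt h1, pr_gt h2] at hab;
       rw [pr_gt h1, pr_lt h2] at hab; rw [pr_gt h1, pr_gt h2] at hab] <;>
      · rw [Prod.mk.injEq] at hab
        omega
  have hinjj : Set.InjOn (fun k => pr k j) K := by
    intro a ha b hb hab
    rw [Finset.mem_coe, hKmem] at ha hb
    simp only at hab
    rcases lt_or_gt_of_ne ha.1 with h1 | h1 <;> rcases lt_or_gt_of_ne hb.1 with h2 | h2 <;>
      [rw [pr_lt h1, pr_lt h2] at hab; rw [pr_lt h1, pr_gt h2] at hab;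
       rw [pr_gt h1, pr_lt h2] at hab; rw [pr_gt h1, pr_gt h2] at hab] <;>
      · rw [Prod.mk.injEq] at hab
        omega
  rw [Finset.sum_image hinji, Finset.sum_image hinjj, ← Finset.sum_add_distrib]

end Aux2
section Key
open Finset

lemma ite_not_one (P : Prop) [Decidable P] :
    (if ¬ P then (1:ℤ) else 0) = 1 - (if P then 1 else 0) := by
  by_cases h : P <;> simp [h]

lemma sum_bdA (n : ℕ) (i j : ℤ) (hi : 1 ≤ i) (hij : i < j) (hj : j ≤ (n:ℤ)) :
    ∑ k ∈ ((Finset.Icc (1:ℤ) (n:ℤ)).erase i).erase j,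
      (if i < k ∧ k < j then (2:ℤ) else 0) = 2*(j-i) - 2 := by
  classical
  rw [← Finset.sum_filter]
  have : (((Finset.Icc (1:ℤ) (n:ℤ)).erase i).erase j).filter (fun k => i < k ∧ k < j)
      = Finset.Ioo i j := by
    ext k
    simp only [Finset.mem_filter, Finset.mem_erase, Finset.mem_Icc, Finset.mem_Ioo]
    omega
  rw [this, Finset.sum_const, Int.card_Ioo, nsmul_eq_mul]
  have : ((j - i - 1).toNat : ℤ) = j - i - 1 := Int.toNat_of_nonneg (by omega)
  rw [this]; ring

lemma sum_bdB (n : ℕ) (i j : ℤ) (hi : 1 ≤ i) (hij : i < j) (hj : j ≤ (n:ℤ)) :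
    ∑ k ∈ ((Finset.Icc (1:ℤ) (n:ℤ)).erase i).erase j,
      ((if k < i then (4:ℤ) else 0) + (if i < k ∧ k < j then (2:ℤ) else 0))
      = 2*i + 2*j - 6 := by
  classical
  rw [Finset.sum_add_distrib]
  have h1 : ∑ k ∈ ((Finset.Icc (1:ℤ) (n:ℤ)).erase i).erase j,
      (if k < i then (4:ℤ) else 0) = 4*(i-1) := by
    rw [← Finset.sum_filter]
    have : (((Finset.Icc (1:ℤ) (n:ℤ)).erase i).erase j).filter (fun k => k < i)
        = Finset.Ico 1 i := by
      ext k
      simp only [Finset.mem_filter, Finset.mem_erase, Finset.mem_Icc, Finset.mem_Ico]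
      omega
    rw [this, Finset.sum_const, Int.card_Ico, nsmul_eq_mul]
    have : ((i - 1).toNat : ℤ) = i - 1 := Int.toNat_of_nonneg (by omega)
    rw [this]; ring
  rw [h1, sum_bdA n i j hi hij hj]; ring

set_option maxHeartbeats 1000000 in
lemma keyA (n : ℕ) (w : Equiv.Perm ℤ) (hw : w ∈ BGroup n) (i j : ℤ)
    (hi : 1 ≤ i) (hij : i < j) (hj : j ≤ (n:ℤ)) :
    LD n w - LD n (w * tA i j) ≤ 2*(j-i) - 1 ∧
    (LD n w - LD n (w * tA i j) = 2*(j-i) - 1 ↔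
      (w j < w i ∧ ∀ k : ℤ, i < k → k < j → w k < w i ∧ w j < w k)) := by
  classical
  set v := w * tA i j with hv
  have hvk : ∀ k : ℤ, 1 ≤ k → k ≠ i → k ≠ j → v k = w k := by
    intro k h1 h2 h3
    have ht : tA i j k = k := by rw [tA_apply i j hi hij]; split_ifs <;> omega
    rw [hv, Equiv.Perm.mul_apply, ht]
  have hvi : v i = w j := by
    have ht : tA i j i = j := by rw [tA_apply i j hi hij]; split_ifs <;> omega
    rw [hv, Equiv.Perm.mul_apply, ht]
  have hvj : v j = w i := by
    have ht : tA i j j = i := by rw [tA_apply i j hi hij]; split_ifs <;> omega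
    rw [hv, Equiv.Perm.mul_apply, ht]
  have hsub : LD n w - LD n v = ∑ p ∈ Pairs n, (fB w p - fB v p) := by
    rw [LD, LD, Finset.sum_sub_distrib]
  have hdec := sum_decomp n i j hi hij hj (fun p => fB w p - fB v p) (by
    intro p hp h1 h2 h3 h4
    rw [mem_Pairs] at hp
    simp only [fB]
    rw [hvk p.1 hp.1 h1 h2, hvk p.2 hp.2.2.1 h3 h4]
    ring)
  rw [hsub, hdec]
  beta_reduce
  set K := ((Finset.Icc (1:ℤ) (n:ℤ)).erase i).erase j with hK
  have f3 : w i ≠ w j := w_ne _ _ (ne_of_lt hij)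
  have f4 : w i + w j ≠ 0 := w_add_ne hw hi (by omega)
  have hdij : (fB w (i,j) - fB v (i,j)) ≤ 1 ∧
      ((fB w (i,j) - fB v (i,j)) = 1 ↔ w j < w i) := by
    simp only [fB]
    rw [hvi, hvj]
    refine ⟨?_, ?_⟩ <;> split_ifs <;> omega
  have hker : ∀ k ∈ K, (fB w (pr k i) - fB v (pr k i)) + (fB w (pr k j) - fB v (pr k j))
        ≤ (if i < k ∧ k < j then (2:ℤ) else 0) ∧
      ((fB w (pr k i) - fB v (pr k i)) + (fB w (pr k j) - fB v (pr k j))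
        = (if i < k ∧ k < j then (2:ℤ) else 0) ↔
        (i < k → k < j → w k < w i ∧ w j < w k)) := by
    intro k hk
    have hkm : k ≠ j ∧ k ≠ i ∧ 1 ≤ k ∧ k ≤ (n:ℤ) := by
      rw [hK] at hk
      simp only [Finset.mem_erase, Finset.mem_Icc] at hk
      tauto
    have f1 : w k ≠ w i := w_ne _ _ hkm.2.1
    have f2 : w k ≠ w j := w_ne _ _ hkm.1
    have g1 : w k + w i ≠ 0 := w_add_ne hw hkm.2.2.1 hi
    have g2 : w k + w j ≠ 0 := w_add_ne hw hkm.2.2.1 (by omega)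
    have hvkk := hvk k hkm.2.2.1 hkm.2.1 hkm.1
    rcases lt_trichotomy k i with hki | hki | hki
    · rw [pr_lt hki, pr_lt (lt_trans hki hij)]
      simp only [fB]
      rw [hvi, hvj, hvkk]
      refine ⟨?_, ?_⟩ <;> split_ifs <;> omega
    · exact absurd hki hkm.2.1
    · rcases lt_trichotomy k j with hkj | hkj | hkj
      · rw [pr_gt hki, pr_lt hkj]
        simp only [fB]
        rw [hvi, hvj, hvkk]
        simp only [show ((w k : ℤ) < w j) = ¬(w j < w k) from propext (by omega),
          show ((w j : ℤ) + w k < 0) = (w k + w j < 0) from propext (by omega),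
          show ((w i : ℤ) + w k < 0) = (w k + w i < 0) from propext (by omega),
          show ((w k : ℤ) < w i) = ¬(w i < w k) from propext (by omega),
          ite_not_one]
        refine ⟨?_, ?_⟩ <;> split_ifs <;> omega
      · exact absurd hkj hkm.1
      · rw [pr_gt hki, pr_gt hkj]
        simp only [fB]
        rw [hvi, hvj, hvkk]
        refine ⟨?_, ?_⟩ <;> split_ifs <;> omega
  have hSle : ∑ k ∈ K, ((fB w (pr k i) - fB v (pr k i)) + (fB w (pr k j) - fB v (pr k j)))
      ≤ ∑ k ∈ K, (if i < k ∧ k < j then (2:ℤ) else 0) :=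
    Finset.sum_le_sum (fun k hk => (hker k hk).1)
  have hSsum : ∑ k ∈ K, (if i < k ∧ k < j then (2:ℤ) else 0) = 2*(j-i) - 2 := by
    rw [hK]; exact sum_bdA n i j hi hij hj
  constructor
  · rw [hSsum] at hSle
    have := hdij.1
    omega
  · rw [hSsum] at hSle
    constructor
    · intro heq
      have hX : (fB w (i,j) - fB v (i,j)) = 1 := by
        have := hdij.1; omega
      have hS : ∑ k ∈ K, ((fB w (pr k i) - fB v (pr k i)) + (fB w (pr k j) - fB v (pr k j)))
          = 2*(j-i) - 2 := by
        have := hdij.1; omega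
      refine ⟨hdij.2.mp hX, ?_⟩
      rw [← hSsum] at hS
      have hall := (Finset.sum_eq_sum_iff_of_le (fun k hk => (hker k hk).1)).mp hS
      intro k h1 h2
      have hkK : k ∈ K := by
        rw [hK]
        simp only [Finset.mem_erase, Finset.mem_Icc]
        omega
      exact ((hker k hkK).2.mp (hall k hkK)) h1 h2
    · rintro ⟨h1, h2⟩
      have hX : (fB w (i,j) - fB v (i,j)) = 1 := hdij.2.mpr h1
      have hS : ∑ k ∈ K, ((fB w (pr k i) - fB v (pr k i)) + (fB w (pr k j) - fB v (pr k j)))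
          = 2*(j-i) - 2 := by
        rw [← hSsum]
        apply Finset.sum_congr rfl
        intro k hk
        apply (hker k hk).2.mpr
        intro ha hb
        exact h2 k ha hb
      omega

set_option maxHeartbeats 1000000 in
lemma keyB (n : ℕ) (w : Equiv.Perm ℤ) (hw : w ∈ BGroup n) (i j : ℤ)
    (hi : 1 ≤ i) (hij : i < j) (hj : j ≤ (n:ℤ)) :
    LD n w - LD n (w * tB i j) ≤ 2*i + 2*j - 5 ∧
    (LD n w - LD n (w * tB i j) = 2*i + 2*j - 5 ↔
      (w i + w j < 0 ∧
       (∀ k : ℤ, 1 ≤ k → k < i → (w i < w k ∧ w k + w i < 0 ∧ w j < w k ∧ w k + w j < 0)) ∧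
       (∀ k : ℤ, i < k → k < j → (w i + w k < 0 ∧ w j < w k)))) := by
  classical
  set v := w * tB i j with hv
  have hvk : ∀ k : ℤ, 1 ≤ k → k ≠ i → k ≠ j → v k = w k := by
    intro k h1 h2 h3
    have ht : tB i j k = k := by rw [tB_apply i j hi hij]; split_ifs <;> omega
    rw [hv, Equiv.Perm.mul_apply, ht]
  have hvi : v i = -(w j) := by
    have ht : tB i j i = -j := by rw [tB_apply i j hi hij]; split_ifs <;> omega
    rw [hv, Equiv.Perm.mul_apply, ht, hw.1]
  have hvj : v j = -(w i) := by
    have ht : tB i j j = -i := by rw [tB_apply i j hi hij]; split_ifs <;> omega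
    rw [hv, Equiv.Perm.mul_apply, ht, hw.1]
  have hsub : LD n w - LD n v = ∑ p ∈ Pairs n, (fB w p - fB v p) := by
    rw [LD, LD, Finset.sum_sub_distrib]
  have hdec := sum_decomp n i j hi hij hj (fun p => fB w p - fB v p) (by
    intro p hp h1 h2 h3 h4
    rw [mem_Pairs] at hp
    simp only [fB]
    rw [hvk p.1 hp.1 h1 h2, hvk p.2 hp.2.2.1 h3 h4]
    ring)
  rw [hsub, hdec]
  beta_reduce
  set K := ((Finset.Icc (1:ℤ) (n:ℤ)).erase i).erase j with hK
  have f3 : w i ≠ w j := w_ne _ _ (ne_of_lt hij)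
  have f4 : w i + w j ≠ 0 := w_add_ne hw hi (by omega)
  have hdij : (fB w (i,j) - fB v (i,j)) ≤ 1 ∧
      ((fB w (i,j) - fB v (i,j)) = 1 ↔ w i + w j < 0) := by
    simp only [fB]
    rw [hvi, hvj]
    refine ⟨?_, ?_⟩ <;> split_ifs <;> omega
  have hker : ∀ k ∈ K, (fB w (pr k i) - fB v (pr k i)) + (fB w (pr k j) - fB v (pr k j))
        ≤ ((if k < i then (4:ℤ) else 0) + (if i < k ∧ k < j then (2:ℤ) else 0)) ∧
      ((fB w (pr k i) - fB v (pr k i)) + (fB w (pr k j) - fB v (pr k j))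
        = ((if k < i then (4:ℤ) else 0) + (if i < k ∧ k < j then (2:ℤ) else 0)) ↔
        ((k < i → (w i < w k ∧ w k + w i < 0 ∧ w j < w k ∧ w k + w j < 0)) ∧
         (i < k → k < j → (w i + w k < 0 ∧ w j < w k)))) := by
    intro k hk
    have hkm : k ≠ j ∧ k ≠ i ∧ 1 ≤ k ∧ k ≤ (n:ℤ) := by
      rw [hK] at hk
      simp only [Finset.mem_erase, Finset.mem_Icc] at hk
      tauto
    have f1 : w k ≠ w i := w_ne _ _ hkm.2.1
    have f2 : w k ≠ w j := w_ne _ _ hkm.1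
    have g1 : w k + w i ≠ 0 := w_add_ne hw hkm.2.2.1 hi
    have g2 : w k + w j ≠ 0 := w_add_ne hw hkm.2.2.1 (by omega)
    have hvkk := hvk k hkm.2.2.1 hkm.2.1 hkm.1
    rcases lt_trichotomy k i with hki | hki | hki
    · rw [pr_lt hki, pr_lt (lt_trans hki hij)]
      simp only [fB]
      rw [hvi, hvj, hvkk]
      simp only [show ((-(w j) : ℤ) < w k) = ¬(w k + w j < 0) from propext (by omega),
        show ((w k : ℤ) + -(w j) < 0) = ¬(w j < w k) from propext (by omega),
        show ((-(w i) : ℤ) < w k) = ¬(w k + w i < 0) from propext (by omega),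
        show ((w k : ℤ) + -(w i) < 0) = ¬(w i < w k) from propext (by omega),
        ite_not_one]
      refine ⟨?_, ?_⟩ <;> split_ifs <;> omega
    · exact absurd hki hkm.2.1
    · rcases lt_trichotomy k j with hkj | hkj | hkj
      · rw [pr_gt hki, pr_lt hkj]
        simp only [fB]
        rw [hvi, hvj, hvkk]
        simp only [show ((w k : ℤ) < -(w j)) = (w k + w j < 0) from propext (by omega),
          show ((-(w j) : ℤ) + w k < 0) = ¬(w j < w k) from propext (by omega),
          show ((-(w i) : ℤ) < w k) = ¬(w i + w k < 0) from propext (by omega),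
          show ((w k : ℤ) + -(w i) < 0) = (w k < w i) from propext (by omega),
          show ((w k : ℤ) + w j < 0) = (w k + w j < 0) from propext (by omega),
          ite_not_one]
        refine ⟨?_, ?_⟩ <;> split_ifs <;> omega
      · exact absurd hkj hkm.1
      · rw [pr_gt hki, pr_gt hkj]
        simp only [fB]
        rw [hvi, hvj, hvkk]
        simp only [show ((w k : ℤ) < -(w j)) = (w j + w k < 0) from propext (by omega),
          show ((-(w j) : ℤ) + w k < 0) = (w k < w j) from propext (by omega),
          show ((w k : ℤ) < -(w i)) = (w i + w k < 0) from propext (by omega),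
          show ((-(w i) : ℤ) + w k < 0) = (w k < w i) from propext (by omega)]
        refine ⟨?_, ?_⟩ <;> split_ifs <;> omega
  have hSle : ∑ k ∈ K, ((fB w (pr k i) - fB v (pr k i)) + (fB w (pr k j) - fB v (pr k j)))
      ≤ ∑ k ∈ K, ((if k < i then (4:ℤ) else 0) + (if i < k ∧ k < j then (2:ℤ) else 0)) :=
    Finset.sum_le_sum (fun k hk => (hker k hk).1)
  have hSsum : ∑ k ∈ K, ((if k < i then (4:ℤ) else 0) + (if i < k ∧ k < j then (2:ℤ) else 0))
      = 2*i + 2*j - 6 := by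
    rw [hK]; exact sum_bdB n i j hi hij hj
  constructor
  · rw [hSsum] at hSle
    have := hdij.1
    omega
  · rw [hSsum] at hSle
    constructor
    · intro heq
      have hX : (fB w (i,j) - fB v (i,j)) = 1 := by
        have := hdij.1; omega
      have hS : ∑ k ∈ K, ((fB w (pr k i) - fB v (pr k i)) + (fB w (pr k j) - fB v (pr k j)))
          = 2*i + 2*j - 6 := by
        have := hdij.1; omega
      rw [← hSsum] at hS
      have hall := (Finset.sum_eq_sum_iff_of_le (fun k hk => (hker k hk).1)).mp hS
      refine ⟨hdij.2.mp hX, ?_, ?_⟩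
      · intro k hk1 hk2
        have hkK : k ∈ K := by
          rw [hK]; simp only [Finset.mem_erase, Finset.mem_Icc]; omega
        exact ((hker k hkK).2.mp (hall k hkK)).1 hk2
      · intro k hk1 hk2
        have hkK : k ∈ K := by
          rw [hK]; simp only [Finset.mem_erase, Finset.mem_Icc]; omega
        exact ((hker k hkK).2.mp (hall k hkK)).2 hk1 hk2
    · rintro ⟨h1, h2, h3⟩
      have hX : (fB w (i,j) - fB v (i,j)) = 1 := hdij.2.mpr h1
      have hS : ∑ k ∈ K, ((fB w (pr k i) - fB v (pr k i)) + (fB w (pr k j) - fB v (pr k j)))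
          = 2*i + 2*j - 6 := by
        rw [← hSsum]
        apply Finset.sum_congr rfl
        intro k hk
        apply (hker k hk).2.mpr
        have hkm : k ≠ j ∧ k ≠ i ∧ 1 ≤ k ∧ k ≤ (n:ℤ) := by
          rw [hK] at hk
          simp only [Finset.mem_erase, Finset.mem_Icc] at hk
          tauto
        exact ⟨fun hki => h2 k hkm.2.2.1 hki, fun ha hb => h3 k ha hb⟩
      omega

end Key
section Bridge
open Finset

lemma LD_nonneg (n : ℕ) (w : Equiv.Perm ℤ) : 0 ≤ LD n w := by
  apply Finset.sum_nonneg
  intro p _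
  unfold fB
  split_ifs <;> omega

lemma LD_one (n : ℕ) : LD n 1 = 0 := by
  apply Finset.sum_eq_zero
  intro p hp
  rw [mem_Pairs] at hp
  unfold fB
  rw [Equiv.Perm.one_apply, Equiv.Perm.one_apply]
  rw [if_neg (by omega), if_neg (by omega)]
  ring

lemma SD_cases {n : ℕ} {s : Equiv.Perm ℤ} (hs : s ∈ SD n) :
    (2 ≤ n ∧ s = tB 1 2) ∨ ∃ i : ℤ, 1 ≤ i ∧ i + 1 ≤ (n:ℤ) ∧ s = tA i (i+1) := by
  rcases hs with ⟨h1, h2⟩ | ⟨i, h1, h2, h3⟩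
  · left
    refine ⟨h1, ?_⟩
    rw [h2]; rfl
  · right
    exact ⟨i, h1, h2, by rw [h3]; rfl⟩

lemma SD_mem_BGroup {n : ℕ} {s : Equiv.Perm ℤ} (hs : s ∈ SD n) : s ∈ BGroup n := by
  rcases SD_cases hs with ⟨h1, h2⟩ | ⟨i, h1, h2, h3⟩
  · rw [h2]
    exact tB_mem n 1 2 (by omega) (by omega) (by exact_mod_cast h1)
  · rw [h3]
    exact tA_mem n i (i+1) h1 (by omega) h2

end Bridge
section Parity
open Finset

lemma negB_tA (n : ℕ) (w : Equiv.Perm ℤ) (i j : ℤ)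
    (hi : 1 ≤ i) (hij : i < j) (hj : j ≤ (n:ℤ)) :
    negB n (w * tA i j) = negB n w := by
  classical
  unfold negB negSet
  have hrange : ∀ k : ℤ, 1 ≤ k → k ≤ (n:ℤ) → (1 ≤ tA i j k ∧ tA i j k ≤ (n:ℤ)) := by
    intro k h1 h2; rw [tA_apply i j hi hij]; split_ifs <;> omega
  have hinv : ∀ k : ℤ, tA i j (tA i j k) = k := by
    intro k
    rw [tA_apply i j hi hij, tA_apply i j hi hij]
    split_ifs <;> omega
  apply Finset.card_nbij' (fun k => tA i j k) (fun k => tA i j k)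
  · intro k hk
    simp only [Finset.mem_coe, Finset.mem_filter, Finset.mem_Icc] at hk ⊢
    refine ⟨⟨(hrange k hk.1.1 hk.1.2).1, (hrange k hk.1.1 hk.1.2).2⟩, ?_⟩
    have := hk.2
    rw [Equiv.Perm.mul_apply] at this
    exact this
  · intro k hk
    simp only [Finset.mem_coe, Finset.mem_filter, Finset.mem_Icc] at hk ⊢
    refine ⟨⟨(hrange k hk.1.1 hk.1.2).1, (hrange k hk.1.1 hk.1.2).2⟩, ?_⟩
    rw [Equiv.Perm.mul_apply, hinv]
    exact hk.2
  · intro k _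
    exact hinv k
  · intro k _
    exact hinv k

lemma card_filter_split (S : Finset ℤ) (p : ℤ → Prop) [DecidablePred p] (i j : ℤ)
    (hi : i ∈ S) (hj : j ∈ S) (hij : i ≠ j) :
    (S.filter p).card = (((S.erase i).erase j).filter p).card
      + (if p i then 1 else 0) + (if p j then 1 else 0) := by
  classical
  have hjm : j ∈ S.erase i := Finset.mem_erase.mpr ⟨Ne.symm hij, hj⟩
  rw [Finset.card_filter, Finset.card_filter,
    ← Finset.sum_erase_add S _ hi, ← Finset.sum_erase_add (S.erase i) _ hjm]
  ring

lemma negB_tB_even (n : ℕ) (w : Equiv.Perm ℤ) (hw : w ∈ BGroup n) (i j : ℤ)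
    (hi : 1 ≤ i) (hij : i < j) (hj : j ≤ (n:ℤ)) :
    (Even (negB n (w * tB i j)) ↔ Even (negB n w)) := by
  classical
  unfold negB negSet
  have hiS : i ∈ Finset.Icc (1:ℤ) (n:ℤ) := Finset.mem_Icc.mpr ⟨hi, by omega⟩
  have hjS : j ∈ Finset.Icc (1:ℤ) (n:ℤ) := Finset.mem_Icc.mpr ⟨by omega, hj⟩
  rw [card_filter_split _ _ i j hiS hjS (ne_of_lt hij),
      card_filter_split _ (fun k => w k < 0) i j hiS hjS (ne_of_lt hij)]
  have hTeq : (((Finset.Icc (1:ℤ) (n:ℤ)).erase i).erase j).filter (fun k => (w * tB i j) k < 0)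
      = (((Finset.Icc (1:ℤ) (n:ℤ)).erase i).erase j).filter (fun k => w k < 0) := by
    apply Finset.filter_congr
    intro k hk
    simp only [Finset.mem_erase, Finset.mem_Icc] at hk
    have ht : tB i j k = k := by
      rw [tB_apply i j hi hij]; split_ifs <;> omega
    rw [Equiv.Perm.mul_apply, ht]
  rw [hTeq]
  have hvi : (w * tB i j) i = -(w j) := by
    have ht : tB i j i = -j := by rw [tB_apply i j hi hij]; split_ifs <;> omega
    rw [Equiv.Perm.mul_apply, ht, hw.1]
  have hvj : (w * tB i j) j = -(w i) := by
    have ht : tB i j j = -i := by rw [tB_apply i j hi hij]; split_ifs <;> omega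
    rw [Equiv.Perm.mul_apply, ht, hw.1]
  rw [hvi, hvj]
  have hwi : w i ≠ 0 := w_pos_ne_zero hw hi
  have hwj : w j ≠ 0 := w_pos_ne_zero hw (by omega)
  rw [Nat.even_iff, Nat.even_iff]
  split_ifs <;> omega

lemma negB_tA_val (n : ℕ) (i j : ℤ) (hi : 1 ≤ i) (hij : i < j) (hj : j ≤ (n:ℤ)) :
    negB n (tA i j) = 0 := by
  have := negB_tA n 1 i j hi hij hj
  rw [one_mul] at this
  rw [this]
  unfold negB negSet
  rw [Finset.card_eq_zero, Finset.filter_eq_empty_iff]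
  intro k hk
  rw [Finset.mem_Icc] at hk
  rw [Equiv.Perm.one_apply]
  omega

lemma negB_tB_val_even (n : ℕ) (i j : ℤ) (hi : 1 ≤ i) (hij : i < j) (hj : j ≤ (n:ℤ)) :
    Even (negB n (tB i j)) := by
  have h := negB_tB_even n 1 (Subgroup.one_mem _) i j hi hij hj
  rw [one_mul] at h
  rw [h]
  have : negB n 1 = 0 := by
    unfold negB negSet
    rw [Finset.card_eq_zero, Finset.filter_eq_empty_iff]
    intro k hk
    rw [Finset.mem_Icc] at hk
    rw [Equiv.Perm.one_apply]
    omega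
  rw [this]
  exact Even.zero

end Parity
section Words
open Finset

lemma LD_step (n : ℕ) (w : Equiv.Perm ℤ) (hw : w ∈ BGroup n) {s : Equiv.Perm ℤ}
    (hs : s ∈ SD n) : LD n (w * s) ≤ LD n w + 1 := by
  rcases SD_cases hs with ⟨h2n, rfl⟩ | ⟨i, h1, h2, rfl⟩
  · have h2n' : (2:ℤ) ≤ (n:ℤ) := by exact_mod_cast h2n
    have hws : w * tB 1 2 ∈ BGroup n := mul_mem hw (tB_mem n 1 2 (by omega) (by omega) h2n')
    have hk := (keyB n (w * tB 1 2) hws 1 2 (by omega) (by omega) h2n').1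
    rw [mul_assoc, tB_sq 1 2 (by omega) (by omega), mul_one] at hk
    omega
  · have hws : w * tA i (i+1) ∈ BGroup n := mul_mem hw (tA_mem n i (i+1) h1 (by omega) h2)
    have hk := (keyA n (w * tA i (i+1)) hws i (i+1) h1 (by omega) h2).1
    rw [mul_assoc, tA_sq i (i+1) h1 (by omega), mul_one] at hk
    omega

lemma LD_le_length (n : ℕ) (L : List (Equiv.Perm ℤ)) (hL : ∀ s ∈ L, s ∈ SD n) :
    LD n L.prod ≤ L.length := by
  induction L using List.reverseRecOn with
  | nil => simp [LD_one]
  | append_singleton l a ih =>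
    have hl : ∀ s ∈ l, s ∈ SD n := fun s hs => hL s (by simp [hs])
    have ha : a ∈ SD n := hL a (by simp)
    have hw : l.prod ∈ BGroup n := list_prod_mem (fun x hx => SD_mem_BGroup (hl x hx))
    have hstep := LD_step n l.prod hw ha
    have := ih hl
    rw [List.prod_append, List.prod_cons, List.prod_nil, mul_one]
    simp only [List.length_append, List.length_cons, List.length_nil]
    push_cast
    omega

lemma incr_all (n : ℕ) (w : Equiv.Perm ℤ)
    (h : ∀ k : ℤ, 1 ≤ k → k + 1 ≤ (n:ℤ) → w k < w (k+1)) :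
    ∀ i j : ℤ, 1 ≤ i → i < j → j ≤ (n:ℤ) → w i < w j := by
  intro i j hi hij hj
  have key : ∀ m : ℤ, i + 1 ≤ m → m ≤ (n:ℤ) → w i < w m := by
    intro m hm
    exact Int.le_induction (motive := fun t _ => t ≤ (n:ℤ) → w i < w t)
      (fun h' => h i hi h')
      (fun m' hm' ih h' => by
        have h1 : w i < w m' := ih (by omega)
        have h2 : w m' < w (m'+1) := h m' (by omega) (by omega)
        omega) m hm
  exact key j (by omega) hj

lemma ge_incr (n : ℕ) (u : Equiv.Perm ℤ)
    (hpos : ∀ k : ℤ, 1 ≤ k → k ≤ (n:ℤ) → 0 < u k)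
    (hinc : ∀ i j : ℤ, 1 ≤ i → i < j → j ≤ (n:ℤ) → u i < u j) :
    ∀ k : ℤ, 1 ≤ k → k ≤ (n:ℤ) → k ≤ u k := by
  intro k hk
  exact Int.le_induction (motive := fun t _ => t ≤ (n:ℤ) → t ≤ u t)
    (fun h' => by have := hpos 1 (by omega) h'; omega)
    (fun m hm ih h' => by
      have h1 : m ≤ u m := ih (by omega)
      have h2 : u m < u (m+1) := hinc m (m+1) (by omega) (by omega) h'
      omega) k hk

lemma LD_zero_eq_one (n : ℕ) (w : Equiv.Perm ℤ) (hw : w ∈ BGroup n)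
    (hev : Even (negB n w)) (h0 : LD n w = 0) : w = 1 := by
  classical
  have hall : ∀ p ∈ Pairs n, fB w p = 0 := by
    rw [LD] at h0
    exact (Finset.sum_eq_zero_iff_of_nonneg (fun p _ => by unfold fB; split_ifs <;> omega)).mp h0
  have hpair : ∀ i j : ℤ, 1 ≤ i → i < j → j ≤ (n:ℤ) → (w i < w j ∧ 0 < w i + w j) := by
    intro i j h1 h2 h3
    have h := hall (i,j) (mem_Pairs.mpr ⟨h1, by omega, by omega, h3, h2⟩)
    have f1 : w i ≠ w j := w_ne _ _ (by omega)
    have f2 : w i + w j ≠ 0 := w_add_ne hw h1 (by omega)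
    simp only [fB] at h
    split_ifs at h <;> omega
  have hnoneg : ∀ k : ℤ, 1 ≤ k → k ≤ (n:ℤ) → 0 < w k := by
    by_contra hc
    push_neg at hc
    obtain ⟨k, hk1, hk2, hk3⟩ := hc
    have hkneg : w k < 0 := lt_of_le_of_ne hk3 (w_pos_ne_zero hw hk1)
    have hset : negSet n w = {k} := by
      ext l
      simp only [negSet, Finset.mem_filter, Finset.mem_Icc, Finset.mem_singleton]
      constructor
      · rintro ⟨⟨hl1, hl2⟩, hl3⟩
        by_contra hlk
        rcases lt_or_gt_of_ne hlk with h | h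
        · have := (hpair l k hl1 h hk2).2; omega
        · have := (hpair k l hk1 h hl2).2; omega
      · rintro rfl
        exact ⟨⟨hk1, hk2⟩, hkneg⟩
    have : negB n w = 1 := by rw [negB, hset, Finset.card_singleton]
    rw [this] at hev
    exact (Nat.not_even_iff.mpr rfl) hev
  have hinc : ∀ i j : ℤ, 1 ≤ i → i < j → j ≤ (n:ℤ) → w i < w j :=
    fun i j h1 h2 h3 => (hpair i j h1 h2 h3).1
  have hrange : ∀ k : ℤ, 1 ≤ k → k ≤ (n:ℤ) → (1 ≤ w k ∧ w k ≤ (n:ℤ)) := by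
    intro k h1 h2
    have ha := w_abs_le hw h1 h2
    rw [abs_le] at ha
    have := hnoneg k h1 h2
    omega
  -- inverse
  have hu := Subgroup.inv_mem (BGroup n) hw
  have hupos : ∀ k : ℤ, 1 ≤ k → k ≤ (n:ℤ) → 0 < w⁻¹ k := by
    intro k h1 h2
    by_contra hc
    push_neg at hc
    have hne : w⁻¹ k ≠ 0 := w_pos_ne_zero hu h1
    have habs : |w⁻¹ k| ≤ (n:ℤ) := w_abs_le hu h1 h2
    rw [abs_le] at habs
    have ha1 : 1 ≤ -(w⁻¹ k) := by omega
    have ha2 : -(w⁻¹ k) ≤ (n:ℤ) := by omega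
    have hwa : w (-(w⁻¹ k)) = -k := by
      rw [w_neg hw, Equiv.Perm.coe_inv, Equiv.apply_symm_apply]
    have := hnoneg (-(w⁻¹ k)) ha1 ha2
    omega
  have hurange : ∀ k : ℤ, 1 ≤ k → k ≤ (n:ℤ) → (1 ≤ w⁻¹ k ∧ w⁻¹ k ≤ (n:ℤ)) := by
    intro k h1 h2
    have ha := w_abs_le hu h1 h2
    rw [abs_le] at ha
    have := hupos k h1 h2
    omega
  have huinc : ∀ i j : ℤ, 1 ≤ i → i < j → j ≤ (n:ℤ) → w⁻¹ i < w⁻¹ j := by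
    intro i j h1 h2 h3
    by_contra hc
    push_neg at hc
    have hne : w⁻¹ i ≠ w⁻¹ j := w_ne _ _ (by omega)
    have hlt : w⁻¹ j < w⁻¹ i := by omega
    have r1 := hurange i h1 (by omega)
    have r2 := hurange j (by omega) h3
    have := hinc (w⁻¹ j) (w⁻¹ i) r2.1 hlt r1.2
    rw [Equiv.Perm.coe_inv, Equiv.apply_symm_apply, Equiv.apply_symm_apply] at this
    omega
  have hge := ge_incr n w (fun k h1 h2 => hnoneg k h1 h2) hinc
  have hgeu := ge_incr n w⁻¹ hupos huinc
  have hfix : ∀ k : ℤ, 1 ≤ k → k ≤ (n:ℤ) → w k = k := by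
    intro k h1 h2
    have r := hrange k h1 h2
    have h3 := hge k h1 h2
    have h4 := hgeu (w k) r.1 r.2
    rw [Equiv.Perm.coe_inv, Equiv.symm_apply_apply] at h4
    omega
  ext x
  rw [Equiv.Perm.one_apply]
  rcases le_or_gt x (-1) with hx | hx
  · rcases le_or_gt (-(n:ℤ)) x with hx2 | hx2
    · have : w (-(-x)) = -(w (-x)) := w_neg hw (-x)
      rw [neg_neg] at this
      rw [this, hfix (-x) (by omega) (by omega)]
      omega
    · exact hw.2 x (by rw [lt_abs]; omega)
  · rcases lt_or_ge x 1 with hx1 | hx1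
    · have : x = 0 := by omega
      rw [this]
      exact w_zero hw
    · rcases le_or_gt x (n:ℤ) with hx2 | hx2
      · exact hfix x hx1 hx2
      · exact hw.2 x (by rw [lt_abs]; omega)

end Words
section ExistsWord
open Finset

lemma exists_word (n : ℕ) : ∀ m : ℕ, ∀ w : Equiv.Perm ℤ, w ∈ BGroup n →
    Even (negB n w) → LD n w = (m:ℤ) →
    ∃ L : List (Equiv.Perm ℤ), (∀ s ∈ L, s ∈ SD n) ∧ L.prod = w ∧ L.length = m := by
  intro m
  induction m with
  | zero =>
    intro w hw hev h0
    refine ⟨[], by simp, ?_, rfl⟩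
    rw [List.prod_nil, LD_zero_eq_one n w hw hev (by exact_mod_cast h0)]
  | succ m ih =>
    intro w hw hev hm
    by_cases hdesc : ∃ k : ℤ, 1 ≤ k ∧ k + 1 ≤ (n:ℤ) ∧ w (k+1) < w k
    · obtain ⟨k, hk1, hk2, hk3⟩ := hdesc
      have hsmem : tA k (k+1) ∈ SD n := Or.inr ⟨k, hk1, hk2, rfl⟩
      have heq := (keyA n w hw k (k+1) hk1 (by omega) hk2).2.mpr
        ⟨hk3, by intro l h1 h2; omega⟩
      have hLD : LD n (w * tA k (k+1)) = (m:ℤ) := by push_cast at hm ⊢; omega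
      have hmem : w * tA k (k+1) ∈ BGroup n := mul_mem hw (tA_mem n k (k+1) hk1 (by omega) hk2)
      have hev' : Even (negB n (w * tA k (k+1))) := by
        rw [negB_tA n w k (k+1) hk1 (by omega) hk2]; exact hev
      obtain ⟨L, hL1, hL2, hL3⟩ := ih (w * tA k (k+1)) hmem hev' hLD
      refine ⟨L ++ [tA k (k+1)], ?_, ?_, ?_⟩
      · intro t ht
        rcases List.mem_append.mp ht with h | h
        · exact hL1 t h
        · rw [List.mem_singleton.mp h]; exact hsmem
      · rw [List.prod_append, List.prod_cons, List.prod_nil, mul_one, hL2,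
          mul_assoc, tA_sq k (k+1) hk1 (by omega), mul_one]
      · simp [hL3]
    · push_neg at hdesc
      have hstep : ∀ k : ℤ, 1 ≤ k → k + 1 ≤ (n:ℤ) → w k < w (k+1) := by
        intro k h1 h2
        have hne : w k ≠ w (k+1) := w_ne _ _ (by omega)
        have := hdesc k h1 h2
        omega
      have hinc := incr_all n w hstep
      have hpos : 0 < LD n w := by rw [hm]; push_cast; omega
      have hexists : ∃ p ∈ Pairs n, fB w p ≠ 0 := by
        by_contra hc
        push_neg at hc
        have : LD n w = 0 := Finset.sum_eq_zero hc
        omega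
      obtain ⟨p, hp, hfp⟩ := hexists
      rw [mem_Pairs] at hp
      have hsum : w p.1 + w p.2 < 0 := by
        have hni : ¬ (w p.2 < w p.1) :=
          not_lt.mpr (le_of_lt (hinc p.1 p.2 hp.1 hp.2.2.2.2 hp.2.2.2.1))
        simp only [fB] at hfp
        split_ifs at hfp <;> omega
      have h2n : (2:ℤ) ≤ (n:ℤ) := by omega
      have h12 : w 1 + w 2 < 0 := by
        have e1 : w 1 ≤ w p.1 := by
          rcases eq_or_lt_of_le hp.1 with h | h
          · rw [← h]
          · exact le_of_lt (hinc 1 p.1 (by omega) h (by omega))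
        have e2 : w 2 ≤ w p.2 := by
          rcases eq_or_lt_of_le (show (2:ℤ) ≤ p.2 by omega) with h | h
          · rw [← h]
          · exact le_of_lt (hinc 2 p.2 (by omega) h (by omega))
        omega
      have hsmem : tB 1 2 ∈ SD n := Or.inl ⟨by exact_mod_cast h2n, rfl⟩
      have heq := (keyB n w hw 1 2 (by omega) (by omega) h2n).2.mpr
        ⟨h12, by intro l h1 h2; omega, by intro l h1 h2; omega⟩
      have hLD : LD n (w * tB 1 2) = (m:ℤ) := by push_cast at hm ⊢; omega
      have hmem : w * tB 1 2 ∈ BGroup n := mul_mem hw (tB_mem n 1 2 (by omega) (by omega) h2n)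
      have hev' : Even (negB n (w * tB 1 2)) := by
        rw [negB_tB_even n w hw 1 2 (by omega) (by omega) h2n]; exact hev
      obtain ⟨L, hL1, hL2, hL3⟩ := ih (w * tB 1 2) hmem hev' hLD
      refine ⟨L ++ [tB 1 2], ?_, ?_, ?_⟩
      · intro t ht
        rcases List.mem_append.mp ht with h | h
        · exact hL1 t h
        · rw [List.mem_singleton.mp h]; exact hsmem
      · rw [List.prod_append, List.prod_cons, List.prod_nil, mul_one, hL2,
          mul_assoc, tB_sq 1 2 (by omega) (by omega), mul_one]
      · simp [hL3]

lemma lenD_eq (n : ℕ) (w : Equiv.Perm ℤ) (hw : w ∈ BGroup n) (hev : Even (negB n w)) :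
    (lenD n w : ℤ) = LD n w := by
  obtain ⟨L, hL1, hL2, hL3⟩ := exists_word n (LD n w).toNat w hw hev
    (by rw [Int.toNat_of_nonneg (LD_nonneg n w)])
  have hmemS : (LD n w).toNat ∈
      {r : ℕ | ∃ L : List (Equiv.Perm ℤ), (∀ s ∈ L, s ∈ SD n) ∧ L.prod = w ∧ L.length = r} :=
    ⟨L, hL1, hL2, hL3⟩
  have hle : lenD n w ≤ (LD n w).toNat := Nat.sInf_le hmemS
  have hlb : ∀ r ∈ {r : ℕ | ∃ L : List (Equiv.Perm ℤ),
      (∀ s ∈ L, s ∈ SD n) ∧ L.prod = w ∧ L.length = r}, LD n w ≤ (r:ℤ) := by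
    rintro r ⟨L', h1, h2, h3⟩
    rw [← h2, ← h3]
    exact LD_le_length n L' h1
  have hne : {r : ℕ | ∃ L : List (Equiv.Perm ℤ),
      (∀ s ∈ L, s ∈ SD n) ∧ L.prod = w ∧ L.length = r}.Nonempty := ⟨_, hmemS⟩
  have hmem2 := Nat.sInf_mem hne
  have h2 := hlb _ hmem2
  have : lenD n w = sInf {r : ℕ | ∃ L : List (Equiv.Perm ℤ),
      (∀ s ∈ L, s ∈ SD n) ∧ L.prod = w ∧ L.length = r} := rfl
  rw [this] at hle ⊢
  have h0 := LD_nonneg n w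
  omega

end ExistsWord
section Final
open Finset

lemma LD_tA (n : ℕ) (i j : ℤ) (hi : 1 ≤ i) (hij : i < j) (hj : j ≤ (n:ℤ)) :
    LD n (tA i j) = 2*(j-i) - 1 := by
  have hmem := tA_mem n i j hi hij hj
  have ha : tA i j i = j := by rw [tA_apply i j hi hij]; split_ifs <;> omega
  have hb : tA i j j = i := by rw [tA_apply i j hi hij]; split_ifs <;> omega
  have h := (keyA n (tA i j) hmem i j hi hij hj).2.mpr ⟨by rw [ha, hb]; exact hij, by
    intro k h1 h2
    have hc : tA i j k = k := by rw [tA_apply i j hi hij]; split_ifs <;> omega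
    rw [ha, hb, hc]
    omega⟩
  rw [tA_sq i j hi hij, LD_one] at h
  omega

lemma LD_tB (n : ℕ) (i j : ℤ) (hi : 1 ≤ i) (hij : i < j) (hj : j ≤ (n:ℤ)) :
    LD n (tB i j) = 2*i + 2*j - 5 := by
  have hmem := tB_mem n i j hi hij hj
  have ha : tB i j i = -j := by rw [tB_apply i j hi hij]; split_ifs <;> omega
  have hb : tB i j j = -i := by rw [tB_apply i j hi hij]; split_ifs <;> omega
  have h := (keyB n (tB i j) hmem i j hi hij hj).2.mpr ⟨by rw [ha, hb]; omega, by
    intro k h1 h2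
    have hc : tB i j k = k := by rw [tB_apply i j hi hij]; split_ifs <;> omega
    rw [ha, hb, hc]
    omega, by
    intro k h1 h2
    have hc : tB i j k = k := by rw [tB_apply i j hi hij]; split_ifs <;> omega
    rw [ha, hb, hc]
    omega⟩
  rw [tB_sq i j hi hij, LD_one] at h
  omega

lemma equivA (n : ℕ) (v w : Equiv.Perm ℤ) (hv : v ∈ DSet n) (hw : w ∈ DSet n)
    (i j : ℤ) (hi : 1 ≤ i) (hij : i < j) (hj : j ≤ (n:ℤ)) (hveq : v = w * tA i j) :
    (lenD n w = lenD n v + lenD n (tA i j) ↔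
      (w j < w i ∧ ∀ k : ℤ, i < k → k < j → w k < w i ∧ w j < w k)) := by
  have htmem := tA_mem n i j hi hij hj
  have hteven : Even (negB n (tA i j)) := by
    rw [negB_tA_val n i j hi hij hj]; exact Even.zero
  have e1 := lenD_eq n w hw.1 hw.2
  have e2 := lenD_eq n v hv.1 hv.2
  have e3 := lenD_eq n (tA i j) htmem hteven
  have hLDt := LD_tA n i j hi hij hj
  have hiff := (keyA n w hw.1 i j hi hij hj).2
  rw [← hveq] at hiff
  constructor
  · intro h
    apply hiff.mp
    have hz : LD n w = LD n v + LD n (tA i j) := by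
      rw [← e1, ← e2, ← e3]
      exact_mod_cast h
    omega
  · intro h
    have h2 := hiff.mpr h
    have : (lenD n w : ℤ) = (lenD n v : ℤ) + (lenD n (tA i j) : ℤ) := by
      rw [e1, e2, e3]; omega
    exact_mod_cast this

lemma equivB (n : ℕ) (v w : Equiv.Perm ℤ) (hv : v ∈ DSet n) (hw : w ∈ DSet n)
    (i j : ℤ) (hi : 1 ≤ i) (hij : i < j) (hj : j ≤ (n:ℤ)) (hveq : v = w * tB i j) :
    (lenD n w = lenD n v + lenD n (tB i j) ↔
      (w i + w j < 0 ∧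
       (∀ k : ℤ, 1 ≤ k → k < i → (w i < w k ∧ w k + w i < 0 ∧ w j < w k ∧ w k + w j < 0)) ∧
       (∀ k : ℤ, i < k → k < j → (w i + w k < 0 ∧ w j < w k)))) := by
  have htmem := tB_mem n i j hi hij hj
  have hteven : Even (negB n (tB i j)) := negB_tB_val_even n i j hi hij hj
  have e1 := lenD_eq n w hw.1 hw.2
  have e2 := lenD_eq n v hv.1 hv.2
  have e3 := lenD_eq n (tB i j) htmem hteven
  have hLDt := LD_tB n i j hi hij hj
  have hiff := (keyB n w hw.1 i j hi hij hj).2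
  rw [← hveq] at hiff
  constructor
  · intro h
    apply hiff.mp
    have hz : LD n w = LD n v + LD n (tB i j) := by
      rw [← e1, ← e2, ← e3]
      exact_mod_cast h
    omega
  · intro h
    have h2 := hiff.mpr h
    have : (lenD n w : ℤ) = (lenD n v : ℤ) + (lenD n (tB i j) : ℤ) := by
      rw [e1, e2, e3]; omega
    exact_mod_cast this

lemma convB (n : ℕ) (w : Equiv.Perm ℤ) (hw : w ∈ BGroup n) (i j : ℤ)
    (hi : 1 ≤ i) (hij : i < j) :
    ((w i + w j < 0 ∧
      (∀ k : ℤ, 1 ≤ k → k < i → (w i < w k ∧ w k + w i < 0 ∧ w j < w k ∧ w k + w j < 0)) ∧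
      (∀ k : ℤ, i < k → k < j → (w i + w k < 0 ∧ w j < w k)))
     ↔
     (w i + w j < 0 ∧
      (∀ k : ℤ, 1 ≤ k → k < i → w i < w k ∧ w k + w j < 0) ∧
      (∀ k : ℤ, k ≠ i → 1 ≤ k → k < j → w i + w k ≤ 0 ∧ w j < w k))) := by
  constructor
  · rintro ⟨h0, h1, h2⟩
    refine ⟨h0, fun k hk1 hk2 => ⟨(h1 k hk1 hk2).1, (h1 k hk1 hk2).2.2.2⟩,
      fun k hk0 hk1 hk2 => ?_⟩
    rcases lt_trichotomy k i with h | h | h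
    · have := h1 k hk1 h
      exact ⟨by omega, this.2.2.1⟩
    · exact absurd h hk0
    · have := h2 k h hk2
      exact ⟨by omega, this.2⟩
  · rintro ⟨h0, h1, h2⟩
    refine ⟨h0, fun k hk1 hk2 => ?_, fun k hk1 hk2 => ?_⟩
    · have a1 := h1 k hk1 hk2
      have a2 := h2 k (by omega) hk1 (by omega)
      have hne : w i + w k ≠ 0 := w_add_ne hw hi hk1
      exact ⟨a1.1, by omega, a2.2, a1.2⟩
    · have a2 := h2 k (by omega) (by omega) hk2
      have hne : w i + w k ≠ 0 := w_add_ne hw hi (by omega)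
      exact ⟨by omega, a2.2⟩

end Final
/-- **Lemma (additivity of length under right multiplication by a reflection, type D).**
For `v, w ∈ D_n` and a reflection `t` of `D_n` with `w = vt`, one has
`ℓ_S(w) = ℓ_S(v) + ℓ_S(t)` iff one of the two listed conditions holds. -/
theorem length_additive_iff_D (n : ℕ) (v w t : Equiv.Perm ℤ)
    (hv : v ∈ DSet n) (hw : w ∈ DSet n) (ht : IsDRefl n t) (hvt : w = v * t) :
    lenD n w = lenD n v + lenD n t ↔
      ((∃ i j : ℤ, 1 ≤ i ∧ i < j ∧ j ≤ (n : ℤ) ∧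
          t = Equiv.swap i j * Equiv.swap (-i) (-j) ∧
          w j < w i ∧ ∀ k : ℤ, i < k → k < j → w k < w i ∧ w j < w k) ∨
       (∃ i j : ℤ, 1 ≤ i ∧ i < j ∧ j ≤ (n : ℤ) ∧
          t = Equiv.swap (-i) j * Equiv.swap i (-j) ∧
          w i + w j < 0 ∧
          (∀ k : ℤ, 1 ≤ k → k < i → w i < w k ∧ w k + w j < 0) ∧
          (∀ k : ℤ, k ≠ i → 1 ≤ k → k < j → w i + w k ≤ 0 ∧ w j < w k))) := by
  obtain ⟨d, hdep⟩ := ht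
  constructor
  · -- forward: uses the decomposition of t provided by ht
    intro hlen
    rcases hdep with ⟨i, j, hi, hij, hj, heq, -⟩ | ⟨i, j, hi, hij, hj, heq, -⟩
    · have htA : t = tA i j := heq
      have hveq : v = w * tA i j := by
        rw [hvt, htA, mul_assoc, tA_sq i j hi hij, mul_one]
      rw [htA] at hlen
      have hc := (equivA n v w hv hw i j hi hij hj hveq).mp hlen
      exact Or.inl ⟨i, j, hi, hij, hj, htA ▸ rfl, hc.1, hc.2⟩
    · have htB : t = tB i j := heq
      have hveq : v = w * tB i j := by
        rw [hvt, htB, mul_assoc, tB_sq i j hi hij, mul_one]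
      rw [htB] at hlen
      have hc := (equivB n v w hv hw i j hi hij hj hveq).mp hlen
      exact Or.inr ⟨i, j, hi, hij, hj, htB ▸ rfl, (convB n w hw.1 i j hi hij).mp hc⟩
  · -- backward: uses only the decomposition provided by the right-hand side
    rintro (⟨i, j, hi, hij, hj, heq, hc1, hc2⟩ | ⟨i, j, hi, hij, hj, heq, hc1, hc2, hc3⟩)
    · have htA : t = tA i j := heq
      have hveq : v = w * tA i j := by
        rw [hvt, htA, mul_assoc, tA_sq i j hi hij, mul_one]
      rw [htA]
      exact (equivA n v w hv hw i j hi hij hj hveq).mpr ⟨hc1, hc2⟩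
    · have htB : t = tB i j := heq
      have hveq : v = w * tB i j := by
        rw [hvt, htB, mul_assoc, tB_sq i j hi hij, mul_one]
      rw [htB]
      exact (equivB n v w hv hw i j hi hij hj hveq).mpr
        ((convB n w hw.1 i j hi hij).mpr ⟨hc1, hc2, hc3⟩)
end

section
/- Let (W,S) be any Coxeter system and w ∈ W. Then dp(w) = ℓ_S(w) if and only if w is short-braid-avoiding and the depth of w is realized by a reduced factorization. -/
open List

variable {B W : Type*}

/-- The depth of an element `w` of a Coxeter group: the minimum, over all factorizations
of `w` into reflections, of the sum of the depths `(ℓ_S(t)+1)/2` of the factors. -/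
noncomputable def CoxeterSystem.depth [Group W] {M : CoxeterMatrix B}
    (cs : CoxeterSystem M W) (w : W) : ℕ :=
  sInf {m : ℕ | ∃ L : List W, (∀ t ∈ L, cs.IsReflection t) ∧ L.prod = w ∧
    (L.map fun t => (cs.length t + 1) / 2).sum = m}

/-- The depth of `w` is realized by a reduced factorization: there are reflections
`t_1, …, t_r` with `w = t_1 ⋯ t_r`, `dp(w) = Σ dp(t_i)` and `ℓ_S(w) = Σ ℓ_S(t_i)`. -/
def CoxeterSystem.DepthRealizedReduced [Group W] {M : CoxeterMatrix B}
    (cs : CoxeterSystem M W) (w : W) : Prop :=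
  ∃ L : List W, (∀ t ∈ L, cs.IsReflection t) ∧ L.prod = w ∧
    cs.depth w = (L.map fun t => (cs.length t + 1) / 2).sum ∧
    cs.length w = (L.map cs.length).sum

/-- `w` is short-braid-avoiding: no reduced expression for `w` contains a consecutive
subword `s t s` of simple generators. -/
def CoxeterSystem.ShortBraidAvoiding [Group W] {M : CoxeterMatrix B}
    (cs : CoxeterSystem M W) (w : W) : Prop :=
  ∀ ω : List B, cs.wordProd ω = w → ω.length = cs.length w →
    ¬ ∃ (l₁ l₂ : List B) (a b : B), ω = l₁ ++ [a, b, a] ++ l₂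

namespace CoxeterSystem

attribute [local instance] Classical.propDecidable

variable {B W : Type*} [Group W] {M : CoxeterMatrix B} (cs : CoxeterSystem M W)

local prefix:100 "s" => cs.simple
local prefix:100 "π" => cs.wordProd
local prefix:100 "ℓ" => cs.length
local prefix:100 "ris" => cs.rightInvSeq
local prefix:100 "lis" => cs.leftInvSeq

/-- The function underlying the reflection-parity permutation representation. -/
noncomputable def sigmaFun (i : B) : W × ZMod 2 → W × ZMod 2 :=
  fun p => (s i * p.1 * s i, p.2 + if p.1 = s i then 1 else 0)

theorem conj_simple_eq_simple_iff (i : B) (x : W) :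
    s i * x * s i = s i ↔ x = s i := by
  constructor
  · intro h
    calc x = s i * (s i * x * s i) * s i := by
              rw [mul_assoc (s i) x, cs.simple_mul_simple_cancel_left,
                cs.simple_mul_simple_cancel_right]
    _ = s i * s i * s i := by rw [h]
    _ = s i := by rw [cs.simple_mul_simple_self, one_mul]
  · rintro rfl
    rw [cs.simple_mul_simple_self, one_mul]

theorem sigmaFun_involutive (i : B) : Function.Involutive (cs.sigmaFun i) := by
  rintro ⟨x, ε⟩
  simp only [sigmaFun]
  refine Prod.ext ?_ ?_
  · show s i * (s i * x * s i) * s i = x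
    rw [mul_assoc (s i) x, cs.simple_mul_simple_cancel_left, cs.simple_mul_simple_cancel_right]
  · show ε + (if x = s i then 1 else 0) + (if s i * x * s i = s i then 1 else 0) = ε
    rw [if_congr (cs.conj_simple_eq_simple_iff i x) rfl rfl, add_assoc]
    split_ifs
    · have h11 : (1 + 1 : ZMod 2) = 0 := by decide
      rw [h11, add_zero]
    · rw [add_zero, add_zero]

/-- The reflection-parity permutation representation on the generators. -/
noncomputable def sigma (i : B) : Equiv.Perm (W × ZMod 2) :=
  Function.Involutive.toPerm _ (cs.sigmaFun_involutive i)

theorem sigma_apply (i : B) (p : W × ZMod 2) :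
    cs.sigma i p = (s i * p.1 * s i, p.2 + if p.1 = s i then 1 else 0) := rfl

theorem rightInvSeq_cons (k : B) (ω : List B) :
    ris (k :: ω) = ((π ω)⁻¹ * s k * π ω) :: ris ω := rfl

theorem prod_map_sigma_apply (ω : List B) (x : W) (ε : ZMod 2) :
    (ω.map cs.sigma).prod (x, ε)
      = (π ω * x * (π ω)⁻¹, ε + ((ris ω).count x : ZMod 2)) := by
  induction ω with
  | nil => simp
  | cons k ω ih =>
    rw [map_cons, prod_cons, Equiv.Perm.mul_apply, ih, sigma_apply, rightInvSeq_cons,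
      count_cons]
    have hc : (π ω * x * (π ω)⁻¹ = s k) ↔ (x = (π ω)⁻¹ * s k * π ω) := by
      constructor
      · intro h; rw [← h]; group
      · intro h; rw [h]; group
    refine Prod.ext ?_ ?_
    · show s k * (π ω * x * (π ω)⁻¹) * s k = π (k :: ω) * x * (π (k :: ω))⁻¹
      rw [cs.wordProd_cons, mul_inv_rev, cs.inv_simple]
      group
    · show ε + ((ris ω).count x : ZMod 2) + (if π ω * x * (π ω)⁻¹ = s k then 1 else 0)
        = ε + _
      rw [if_congr hc rfl rfl]
      push_cast [apply_ite (Nat.cast : ℕ → ZMod 2)]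
      rw [add_assoc]
      congr 1
      simp only [beq_iff_eq]
      rw [if_congr eq_comm rfl rfl]


section Dihedral

variable (i j : B)

theorem simple_mul_pow_mul_simple_j (m : ℕ) :
    s j * (s i * s j) ^ m * s j = ((s i * s j) ^ m)⁻¹ := by
  have h : (MulAut.conj (s j)) (s i * s j) = (s i * s j)⁻¹ := by
    simp only [MulAut.conj_apply, cs.inv_simple, mul_inv_rev]
    rw [mul_assoc, mul_assoc, cs.simple_mul_simple_self, mul_one]
  calc s j * (s i * s j) ^ m * s j
      = (MulAut.conj (s j)) ((s i * s j) ^ m) := by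
        simp only [MulAut.conj_apply, cs.inv_simple]
    _ = ((s i * s j) ^ m)⁻¹ := by rw [map_pow, h, inv_pow]

theorem comm_pow_j (m : ℕ) : s j * (s i * s j) ^ m = ((s i * s j) ^ m)⁻¹ * s j := by
  calc s j * (s i * s j) ^ m = (s j * (s i * s j) ^ m * s j) * s j := by
        rw [cs.simple_mul_simple_cancel_right]
    _ = ((s i * s j) ^ m)⁻¹ * s j := by rw [cs.simple_mul_pow_mul_simple_j]

theorem comm_pow_j' (m : ℕ) : (s i * s j) ^ m * s j = s j * ((s i * s j) ^ m)⁻¹ := by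
  calc (s i * s j) ^ m * s j = s j * (s j * (s i * s j) ^ m * s j) := by
        rw [← mul_assoc, ← mul_assoc, cs.simple_mul_simple_self, one_mul]
    _ = s j * ((s i * s j) ^ m)⁻¹ := by rw [cs.simple_mul_pow_mul_simple_j]

theorem wordProd_alternatingWord_add (n : ℕ) :
    π (alternatingWord i j (n + M i j)) =
      π (alternatingWord i j (M i j)) * π (alternatingWord i j n) := by
  have hP : ∀ m : ℕ, π (alternatingWord i j m)
      = (if Even m then 1 else s j) * (s i * s j) ^ (m / 2) :=
    fun m => cs.prod_alternatingWord_eq_mul_pow i j m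
  have hq : (s i * s j) ^ (M i j) = 1 := cs.simple_mul_simple_pow i j
  rcases Nat.even_or_odd (M i j) with ⟨a, hd⟩ | ⟨a, hd⟩ <;>
    rcases Nat.even_or_odd n with ⟨b, hn⟩ | ⟨b, hn⟩ <;>
    rw [hP, hP, hP] <;> rw [hd, hn] <;> rw [hd] at hq
  · rw [if_pos ⟨b + a, by omega⟩, if_pos ⟨a, rfl⟩, if_pos ⟨b, rfl⟩, one_mul, one_mul, one_mul,
      show (b + b + (a + a)) / 2 = b + a by omega,
      show (a + a) / 2 = a by omega, show (b + b) / 2 = b by omega, ← pow_add,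
      Nat.add_comm b a]
  · rw [if_neg (by rw [Nat.even_iff]; omega : ¬ Even (2 * b + 1 + (a + a))), if_pos ⟨a, rfl⟩,
      if_neg (by rw [Nat.even_iff]; omega : ¬ Even (2 * b + 1)), one_mul,
      show (2 * b + 1 + (a + a)) / 2 = b + a by omega, show (a + a) / 2 = a by omega,
      show (2 * b + 1) / 2 = b by omega, ← mul_assoc, cs.comm_pow_j', mul_assoc]
    congr 1
    rw [eq_inv_mul_iff_mul_eq, ← pow_add, show a + (b + a) = b + (a + a) by omega,
      pow_add, hq, mul_one]
  · rw [if_neg (by rw [Nat.even_iff]; omega : ¬ Even (b + b + (2 * a + 1))),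
      if_neg (by rw [Nat.even_iff]; omega : ¬ Even (2 * a + 1)), if_pos ⟨b, rfl⟩, one_mul,
      show (b + b + (2 * a + 1)) / 2 = b + a by omega, show (2 * a + 1) / 2 = a by omega,
      show (b + b) / 2 = b by omega, mul_assoc, ← pow_add, Nat.add_comm b a]
  · rw [if_pos ⟨b + a + 1, by omega⟩, if_neg (by rw [Nat.even_iff]; omega : ¬ Even (2 * a + 1)),
      if_neg (by rw [Nat.even_iff]; omega : ¬ Even (2 * b + 1)), one_mul,
      show (2 * b + 1 + (2 * a + 1)) / 2 = b + a + 1 by omega,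
      show (2 * a + 1) / 2 = a by omega, show (2 * b + 1) / 2 = b by omega]
    rw [mul_assoc (s j) ((s i * s j) ^ a) (s j * (s i * s j) ^ b),
      ← mul_assoc ((s i * s j) ^ a) (s j) ((s i * s j) ^ b),
      cs.comm_pow_j' i j a,
      mul_assoc (s j) (((s i * s j) ^ a)⁻¹) ((s i * s j) ^ b),
      cs.simple_mul_simple_cancel_left,
      eq_inv_mul_iff_mul_eq, ← pow_add, show a + (b + a + 1) = b + (2 * a + 1) by omega,
      pow_add, hq, mul_one]


theorem conj_wordProd_simple_j (i j : B) :
    (π (alternatingWord i j (M i j)))⁻¹ * s j * π (alternatingWord i j (M i j))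
      = if Even (M i j) then s j else s i := by
  have hP := cs.prod_alternatingWord_eq_mul_pow i j (M i j)
  have hq : (s i * s j) ^ (M i j) = 1 := cs.simple_mul_simple_pow i j
  rcases Nat.even_or_odd (M i j) with ⟨a, hd⟩ | ⟨a, hd⟩ <;> rw [hd] at hP hq ⊢ <;> rw [hP]
  · rw [if_pos ⟨a, rfl⟩, if_pos ⟨a, rfl⟩, one_mul, show (a + a) / 2 = a by omega,
      mul_assoc, cs.comm_pow_j, ← mul_assoc, ← mul_inv_rev, ← pow_add, hq, inv_one, one_mul]
  · rw [if_neg (by rw [Nat.even_iff]; omega : ¬ Even (2 * a + 1)),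
      if_neg (by rw [Nat.even_iff]; omega : ¬ Even (2 * a + 1)),
      show (2 * a + 1) / 2 = a by omega, mul_inv_rev, cs.inv_simple]
    have h2a : (s i * s j) ^ (a + a) = (s i * s j)⁻¹ := by
      apply eq_inv_of_mul_eq_one_left
      rw [← pow_succ, show a + a + 1 = 2 * a + 1 by omega, hq]
    calc ((s i * s j) ^ a)⁻¹ * s j * s j * (s j * (s i * s j) ^ a)
        = ((s i * s j) ^ a)⁻¹ * (s j * (s i * s j) ^ a) := by
          rw [cs.simple_mul_simple_cancel_right]
      _ = ((s i * s j) ^ a)⁻¹ * (((s i * s j) ^ a)⁻¹ * s j) := by rw [cs.comm_pow_j]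
      _ = ((s i * s j) ^ a * (s i * s j) ^ a)⁻¹ * s j := by group
      _ = ((s i * s j)⁻¹)⁻¹ * s j := by rw [← pow_add, h2a]
      _ = s i := by rw [inv_inv, cs.simple_mul_simple_cancel_right]

theorem comm_pow_i (i j : B) (m : ℕ) :
    s i * (s i * s j) ^ m = ((s i * s j) ^ m)⁻¹ * s i := by
  have h : (MulAut.conj (s i)) (s i * s j) = (s i * s j)⁻¹ := by
    simp only [MulAut.conj_apply, cs.inv_simple, mul_inv_rev]
    rw [← mul_assoc, cs.simple_mul_simple_self, one_mul]
  have h2 : s i * (s i * s j) ^ m * s i = ((s i * s j) ^ m)⁻¹ := by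
    calc s i * (s i * s j) ^ m * s i
        = (MulAut.conj (s i)) ((s i * s j) ^ m) := by
          simp only [MulAut.conj_apply, cs.inv_simple]
      _ = ((s i * s j) ^ m)⁻¹ := by rw [map_pow, h, inv_pow]
  calc s i * (s i * s j) ^ m = (s i * (s i * s j) ^ m * s i) * s i := by
        rw [cs.simple_mul_simple_cancel_right]
    _ = ((s i * s j) ^ m)⁻¹ * s i := by rw [h2]

theorem conj_wordProd_simple_i (i j : B) :
    (π (alternatingWord i j (M i j)))⁻¹ * s i * π (alternatingWord i j (M i j))
      = if Even (M i j) then s i else s j := by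
  have hP := cs.prod_alternatingWord_eq_mul_pow i j (M i j)
  have hq : (s i * s j) ^ (M i j) = 1 := cs.simple_mul_simple_pow i j
  rcases Nat.even_or_odd (M i j) with ⟨a, hd⟩ | ⟨a, hd⟩ <;> rw [hd] at hP hq ⊢ <;> rw [hP]
  · rw [if_pos ⟨a, rfl⟩, if_pos ⟨a, rfl⟩, one_mul, show (a + a) / 2 = a by omega,
      mul_assoc, cs.comm_pow_i, ← mul_assoc, ← mul_inv_rev, ← pow_add, hq, inv_one, one_mul]
  · rw [if_neg (by rw [Nat.even_iff]; omega : ¬ Even (2 * a + 1)),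
      if_neg (by rw [Nat.even_iff]; omega : ¬ Even (2 * a + 1)),
      show (2 * a + 1) / 2 = a by omega, mul_inv_rev, cs.inv_simple]
    have hji : s j * s i = (s i * s j)⁻¹ := by
      rw [mul_inv_rev]; simp only [cs.inv_simple]
    calc ((s i * s j) ^ a)⁻¹ * s j * s i * (s j * (s i * s j) ^ a)
        = ((s i * s j) ^ a)⁻¹ * (s j * s i) * (s j * (s i * s j) ^ a) := by group
      _ = ((s i * s j) ^ a)⁻¹ * (s i * s j)⁻¹ * (((s i * s j) ^ a)⁻¹ * s j) := by
          rw [hji, cs.comm_pow_j]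
      _ = ((s i * s j) ^ a * (s i * s j) * (s i * s j) ^ a)⁻¹ * s j := by group
      _ = s j := by
          rw [← pow_succ, ← pow_add, show a + 1 + a = 2 * a + 1 by omega, hq, inv_one, one_mul]

theorem ris_alternatingWord_add (i j : B) (n : ℕ) :
    cs.rightInvSeq (alternatingWord i j (n + M i j)) =
      cs.rightInvSeq (alternatingWord i j n) ++ cs.rightInvSeq (alternatingWord i j (M i j)) := by
  induction n with
  | zero => rw [Nat.zero_add]; rfl
  | succ n ih =>
    have h1 : alternatingWord i j (n + 1 + M i j)
        = (if Even (n + M i j) then j else i) :: alternatingWord i j (n + M i j) := by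
      rw [show n + 1 + M i j = (n + M i j) + 1 by omega, alternatingWord_succ']
    have h2 : alternatingWord i j (n + 1) = (if Even n then j else i) :: alternatingWord i j n :=
      alternatingWord_succ' i j n
    rw [h1, h2, rightInvSeq_cons, rightInvSeq_cons, ih, cons_append]
    congr 1
    have hkey : (π (alternatingWord i j (M i j)))⁻¹ * s (if Even (n + M i j) then j else i) *
        π (alternatingWord i j (M i j)) = s (if Even n then j else i) := by
      rcases Nat.even_or_odd (M i j) with hd | hd <;> rcases Nat.even_or_odd n with hn | hn
      · rw [if_pos (hn.add hd), if_pos hn]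
        have := cs.conj_wordProd_simple_j i j
        rwa [if_pos hd] at this
      · rw [if_neg (Nat.not_even_iff_odd.mpr (hn.add_even hd)),
          if_neg (Nat.not_even_iff_odd.mpr hn)]
        have := cs.conj_wordProd_simple_i i j
        rwa [if_pos hd] at this
      · rw [if_neg (Nat.not_even_iff_odd.mpr (hn.add_odd hd)), if_pos hn]
        have := cs.conj_wordProd_simple_i i j
        rwa [if_neg (Nat.not_even_iff_odd.mpr hd)] at this
      · rw [if_pos (hn.add_odd hd), if_neg (Nat.not_even_iff_odd.mpr hn)]
        have := cs.conj_wordProd_simple_j i j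
        rwa [if_neg (Nat.not_even_iff_odd.mpr hd)] at this
    rw [cs.wordProd_alternatingWord_add i j n, ← hkey]
    group

end Dihedral


theorem prod_map_alternatingWord {G : Type*} [Monoid G] (f : B → G) (i j : B) (m : ℕ) :
    ((alternatingWord i j (2 * m)).map f).prod = (f i * f j) ^ m := by
  induction m with
  | zero => simp [alternatingWord]
  | succ m ih =>
    have h : alternatingWord i j (2 * (m + 1)) = i :: j :: alternatingWord i j (2 * m) := by
      rw [show 2 * (m + 1) = (2 * m + 1) + 1 by omega, alternatingWord_succ',
        alternatingWord_succ', if_neg (Nat.not_even_iff_odd.mpr (by rw [Nat.odd_iff]; omega)),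
        if_pos ⟨m, by omega⟩]
    rw [h, map_cons, map_cons, prod_cons, prod_cons, ih, ← mul_assoc, ← pow_succ']

theorem sigma_liftable : M.IsLiftable cs.sigma := by
  intro i j
  have h := prod_map_alternatingWord cs.sigma i j (M i j)
  rw [← h]
  apply Equiv.ext
  rintro ⟨x, ε⟩
  rw [cs.prod_map_sigma_apply]
  have hπ : π (alternatingWord i j (2 * M i j)) = 1 := by
    rw [cs.prod_alternatingWord_eq_mul_pow, if_pos ⟨M i j, by omega⟩, one_mul,
      Nat.mul_div_cancel_left _ (by omega : 0 < 2), cs.simple_mul_simple_pow]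
  have hris : cs.rightInvSeq (alternatingWord i j (2 * M i j))
      = cs.rightInvSeq (alternatingWord i j (M i j))
        ++ cs.rightInvSeq (alternatingWord i j (M i j)) := by
    rw [show 2 * M i j = M i j + M i j by omega]
    exact cs.ris_alternatingWord_add i j (M i j)
  rw [hπ, hris, count_append]
  push_cast
  rw [CharTwo.add_self_eq_zero, add_zero]
  simp

/-- The reflection-parity permutation representation. -/
noncomputable def permRep : W →* Equiv.Perm (W × ZMod 2) :=
  cs.lift ⟨cs.sigma, cs.sigma_liftable⟩

theorem permRep_wordProd (ω : List B) : cs.permRep (π ω) = (ω.map cs.sigma).prod := by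
  unfold wordProd
  rw [map_list_prod, map_map]
  congr 1
  apply List.map_congr_left
  intro x _
  exact cs.lift_apply_simple cs.sigma_liftable x

theorem count_ris_congr (ω ω' : List B) (h : π ω = π ω') (x : W) :
    ((cs.rightInvSeq ω).count x : ZMod 2) = ((cs.rightInvSeq ω').count x : ZMod 2) := by
  have h1 := cs.prod_map_sigma_apply ω x 0
  have h2 := cs.prod_map_sigma_apply ω' x 0
  rw [← cs.permRep_wordProd] at h1 h2
  rw [h] at h1
  have := congrArg Prod.snd (h1.symm.trans h2)
  simpa using this


theorem wordProd_symm_word (ρ : List B) (i : B) :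
    π (ρ ++ [i] ++ ρ.reverse) = π ρ * s i * (π ρ)⁻¹ := by
  rw [cs.wordProd_append, cs.wordProd_append, cs.wordProd_reverse, cs.wordProd_singleton]

theorem odd_count_ris_symm (ρ : List B) (i : B) :
    Odd ((cs.rightInvSeq (ρ ++ [i] ++ ρ.reverse)).count (π ρ * s i * (π ρ)⁻¹)) := by
  induction ρ with
  | nil =>
    simp only [nil_append, reverse_nil, append_nil, cs.wordProd_nil, one_mul, inv_one, mul_one]
    rw [cs.rightInvSeq_singleton]
    simp [List.count_singleton, Nat.odd_iff]
  | cons k ρ ih =>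
    have htinv : (π ρ * s i * (π ρ)⁻¹)⁻¹ = π ρ * s i * (π ρ)⁻¹ := by
      rw [mul_inv_rev, mul_inv_rev, cs.inv_simple, inv_inv, mul_assoc]
    set t' := π ρ * s i * (π ρ)⁻¹ with ht'
    have hT : π (k :: ρ) * s i * (π (k :: ρ))⁻¹ = s k * t' * s k := by
      rw [cs.wordProd_cons, mul_inv_rev, cs.inv_simple, ht']
      group
    set t := s k * t' * s k with ht
    have hw : (k :: ρ) ++ [i] ++ (k :: ρ).reverse
        = k :: ((ρ ++ [i] ++ ρ.reverse) ++ [k]) := by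
      simp [List.reverse_cons]
    set γ := ρ ++ [i] ++ ρ.reverse with hγ
    have hπγ : π γ = t' := cs.wordProd_symm_word ρ i
    have hrisγk : cs.rightInvSeq (γ ++ [k])
        = (List.map (⇑(MulAut.conj (s k))) (cs.rightInvSeq γ)) ++ [s k] := by
      rw [← concat_eq_append, cs.rightInvSeq_concat, concat_eq_append]
    have hconj : (MulAut.conj (s k)) t' = t := by
      rw [MulAut.conj_apply, cs.inv_simple, ht]
    have hcount_map : ((cs.rightInvSeq γ).map (⇑(MulAut.conj (s k)))).count t
        = (cs.rightInvSeq γ).count t' := by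
      rw [← hconj]
      exact List.count_map_of_injective _ _ (MulAut.conj (s k)).injective t'
    have hhead : (π (γ ++ [k]))⁻¹ * s k * π (γ ++ [k]) = s k * t' * s k * t' * s k := by
      rw [cs.wordProd_append, hπγ, cs.wordProd_singleton, mul_inv_rev, cs.inv_simple, htinv]
      group
    have hiff : t = s k ↔ t' = s k := cs.conj_simple_eq_simple_iff k t'
    have hiff2 : s k * t' * s k * t' * s k = t ↔ t' = s k := by
      constructor
      · intro h
        rw [ht] at h
        have h' : s k * t' * s k * t' = s k * t' := mul_right_cancel h
        rw [mul_assoc (s k * t') (s k) t'] at h'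
        have h3 : s k * t' = 1 := by
          apply mul_left_cancel (a := s k * t')
          rw [mul_one]
          exact h'
        have h4 := eq_inv_of_mul_eq_one_right h3
        rwa [cs.inv_simple] at h4
      · intro h
        rw [ht, h]
        simp [cs.simple_mul_simple_self, cs.simple_mul_simple_cancel_right]
    rw [hT, hw, rightInvSeq_cons, hrisγk, count_cons, count_append, hcount_map, hhead,
      count_singleton']
    simp only [beq_iff_eq]
    by_cases hcase : t' = s k
    · rw [if_pos (hiff.mpr hcase).symm, if_pos (hiff2.mpr hcase)]
      rcases ih with ⟨m, hm⟩
      exact ⟨m + 1, by omega⟩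
    · rw [if_neg (fun h => hcase (hiff.mp h.symm)), if_neg (fun h => hcase (hiff2.mp h)),
        add_zero, add_zero]
      exact ih

theorem odd_count_ris_self {t : W} (ht : cs.IsReflection t) {ω : List B} (hπ : π ω = t) :
    Odd ((cs.rightInvSeq ω).count t) := by
  obtain ⟨v, i, hv⟩ := ht
  obtain ⟨ρ, hρ⟩ := cs.wordProd_surjective v
  have hsym : π (ρ ++ [i] ++ ρ.reverse) = t := by
    rw [cs.wordProd_symm_word, hρ, hv]
  have hodd := cs.odd_count_ris_symm ρ i
  rw [hρ, ← hv] at hodd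
  have hcongr := cs.count_ris_congr ω (ρ ++ [i] ++ ρ.reverse) (by rw [hπ, hsym]) t
  rw [ZMod.natCast_eq_natCast_iff] at hcongr
  have : ((cs.rightInvSeq ω).count t) % 2 = ((cs.rightInvSeq (ρ ++ [i] ++ ρ.reverse)).count t) % 2 :=
    hcongr
  rw [Nat.odd_iff] at hodd ⊢
  omega

theorem mem_ris_self {t : W} (ht : cs.IsReflection t) {ω : List B} (hπ : π ω = t) :
    t ∈ cs.rightInvSeq ω := by
  have hodd := cs.odd_count_ris_self ht hπ
  rcases hodd with ⟨m, hm⟩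
  have : 0 < (cs.rightInvSeq ω).count t := by omega
  exact count_pos_iff.mp this

theorem mem_lis_self {t : W} (ht : cs.IsReflection t) {ω : List B} (hπ : π ω = t) :
    t ∈ cs.leftInvSeq ω := by
  have h1 : π ω.reverse = t := by
    rw [cs.wordProd_reverse, hπ, ht.inv]
  have := cs.mem_ris_self ht h1
  rwa [cs.rightInvSeq_reverse, mem_reverse] at this


theorem exists_reduced_braid_pattern {t : W} (ht : cs.IsReflection t) (hne : ℓ t ≠ 1) :
    ∃ ω : List B, π ω = t ∧ ω.length = ℓ t ∧
      ∃ (l₁ l₂ : List B) (a b : B), ω = l₁ ++ [a, b, a] ++ l₂ := by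
  obtain ⟨ω, hred0, hprod⟩ := cs.exists_reduced_word t
  have hlen : ω.length = ℓ t := by rw [hprod]; exact (hred0 : ℓ (π ω) = ω.length).symm
  have hred : cs.IsReduced ω := by rw [IsReduced, ← hprod, hlen]
  have hmem := cs.mem_lis_self ht hprod.symm
  obtain ⟨j, hj, hget⟩ := List.mem_iff_getElem.mp hmem
  rw [length_leftInvSeq] at hj
  have hgetD : (cs.leftInvSeq ω).getD j 1 = t := by
    rw [List.getD_eq_getElem _ _ (by rw [length_leftInvSeq]; exact hj)]
    exact hget
  have hform := cs.getD_leftInvSeq ω j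
  rw [hgetD] at hform
  have hget2 : ω[j]? = some ω[j] := by
    rw [List.getElem?_eq_getElem hj]
  rw [hget2] at hform
  simp only [Option.map_some, Option.getD_some] at hform
  -- hform : t = π (ω.take j) * s ω[j] * (π (ω.take j))⁻¹
  have herase : π (ω.eraseIdx j) = 1 := by
    have h := cs.getD_leftInvSeq_mul_wordProd ω j
    rw [hgetD, ← hprod, ht.mul_self] at h
    exact h.symm
  have htake : cs.IsReduced (ω.take j) := hred.take j
  have hdrop : cs.IsReduced (ω.drop (j + 1)) := hred.drop (j + 1)
  have hlentake : ℓ (π (ω.take j)) = j := by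
    rw [htake, List.length_take]
    omega
  have hdropinv : π (ω.drop (j + 1)) = (π (ω.take j))⁻¹ := by
    rw [List.eraseIdx_eq_take_drop_succ, cs.wordProd_append] at herase
    exact eq_inv_of_mul_eq_one_right herase
  have hlendrop : ℓ (π (ω.drop (j + 1))) = ω.length - (j + 1) := by
    rw [hdrop, List.length_drop]
  have hlen2 : ω.length = 2 * j + 1 := by
    rw [hdropinv, cs.length_inv, hlentake] at hlendrop
    omega
  have hj1 : j ≠ 0 := by
    intro h
    apply hne
    rw [← hlen, hlen2, h]
  have hlenρ : (ω.take j).length = j := by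
    rw [List.length_take]; omega
  have hne' : ω.take j ≠ [] := by
    intro h
    rw [h] at hlenρ
    simp at hlenρ
    omega
  have hρ : (ω.take j).dropLast ++ [(ω.take j).getLast hne'] = ω.take j :=
    List.dropLast_append_getLast hne'
  refine ⟨ω.take j ++ [ω[j]] ++ (ω.take j).reverse, ?_, ?_, (ω.take j).dropLast,
    (ω.take j).dropLast.reverse, (ω.take j).getLast hne', ω[j], ?_⟩
  · rw [cs.wordProd_symm_word, ← hform]
  · rw [← hlen, hlen2]
    simp only [List.length_append, List.length_reverse, hlenρ, List.length_singleton]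
    omega
  · conv_lhs => rw [← hρ]
    simp [List.reverse_append, List.append_assoc]


theorem sum_map_ones {α : Type*} (l : List α) : (l.map fun _ => (1 : ℕ)).sum = l.length := by
  induction l with
  | nil => simp
  | cons x l ih => simp [ih]; omega

theorem depth_le_of_factorization (w : W) (L : List W) (hrefl : ∀ t ∈ L, cs.IsReflection t)
    (hprod : L.prod = w) :
    cs.depth w ≤ (L.map fun t => (cs.length t + 1) / 2).sum :=
  Nat.sInf_le ⟨L, hrefl, hprod, rfl⟩

theorem main_aux (w : W) :
    cs.depth w = cs.length w ↔
      cs.ShortBraidAvoiding w ∧ cs.DepthRealizedReduced w := by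
  constructor
  · intro h
    constructor
    · -- short braid avoiding
      rintro ω hprod hlen ⟨l₁, l₂, a, b, hpat⟩
      have hts : cs.IsReflection (s a * s b * s a) := by
        have := (cs.isReflection_simple (M := M) b).conj (s a)
        rwa [cs.inv_simple] at this
      set L : List W := l₁.map cs.simple ++ [s a * s b * s a] ++ l₂.map cs.simple with hL
      have hrefl : ∀ x ∈ L, cs.IsReflection x := by
        intro x hx
        rw [hL] at hx
        rcases List.mem_append.mp hx with hx | hx
        · rcases List.mem_append.mp hx with hx | hx
          · obtain ⟨i, _, rfl⟩ := List.mem_map.mp hx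
            exact cs.isReflection_simple i
          · rw [List.mem_singleton.mp hx]
            exact hts
        · obtain ⟨i, _, rfl⟩ := List.mem_map.mp hx
          exact cs.isReflection_simple i
      have habab : π [a, b, a] = s a * s b * s a := by
        rw [cs.wordProd_cons, cs.wordProd_cons, cs.wordProd_singleton, mul_assoc]
      have hprodL : L.prod = w := by
        rw [hL, List.prod_append, List.prod_append, List.prod_singleton]
        rw [hpat, cs.wordProd_append, cs.wordProd_append, habab] at hprod
        rw [← hprod]
        rfl
      have hle := cs.depth_le_of_factorization w L hrefl hprodL
      have hsum : (L.map fun t => (cs.length t + 1) / 2).sum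
          = l₁.length + (cs.length (s a * s b * s a) + 1) / 2 + l₂.length := by
        rw [hL, List.map_append, List.map_append, List.sum_append, List.sum_append,
          List.map_map, List.map_map]
        have e1 : (l₁.map ((fun t => (cs.length t + 1) / 2) ∘ cs.simple)).sum = l₁.length := by
          rw [List.map_congr_left (fun i _ => by
            simp only [Function.comp_apply, cs.length_simple] : ∀ i ∈ l₁,
              ((fun t => (cs.length t + 1) / 2) ∘ cs.simple) i = (1 : ℕ)), sum_map_ones]
        have e2 : (l₂.map ((fun t => (cs.length t + 1) / 2) ∘ cs.simple)).sum = l₂.length := by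
          rw [List.map_congr_left (fun i _ => by
            simp only [Function.comp_apply, cs.length_simple] : ∀ i ∈ l₂,
              ((fun t => (cs.length t + 1) / 2) ∘ cs.simple) i = (1 : ℕ)), sum_map_ones]
        rw [e1, e2]
        simp
      have hlab : cs.length (s a * s b * s a) ≤ 3 := by
        rw [← habab]
        exact cs.length_wordProd_le [a, b, a]
      have hlenω : ω.length = l₁.length + 3 + l₂.length := by
        rw [hpat]
        simp
        omega
      rw [hsum] at hle
      omega
    · -- depth realized reduced
      obtain ⟨ω, hlen, hprod⟩ := cs.exists_reduced_word w
      refine ⟨ω.map cs.simple, ?_, ?_, ?_, ?_⟩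
      · rintro t htm
        obtain ⟨i, _, rfl⟩ := List.mem_map.mp htm
        exact cs.isReflection_simple i
      · exact hprod.symm
      · rw [h, List.map_map,
          List.map_congr_left (fun i _ => by
            simp only [Function.comp_apply, cs.length_simple] : ∀ i ∈ ω,
              ((fun t => (cs.length t + 1) / 2) ∘ cs.simple) i = (1 : ℕ)), sum_map_ones, hprod, hlen]
      · rw [List.map_map,
          List.map_congr_left (fun i _ => by
            simp only [Function.comp_apply, cs.length_simple] : ∀ i ∈ ω,
              (cs.length ∘ cs.simple) i = (1 : ℕ)), sum_map_ones, hprod, hlen]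
  · rintro ⟨hsba, L, hrefl, hprodL, hdepth, hlength⟩
    have hall : ∀ t ∈ L, cs.length t = 1 := by
      by_contra hcon
      push_neg at hcon
      obtain ⟨t₀, ht₀mem, ht₀⟩ := hcon
      obtain ⟨γ, hγprod, hγlen, l₁, l₂, a, b, hγpat⟩ :=
        cs.exists_reduced_braid_pattern (hrefl t₀ ht₀mem) ht₀
      obtain ⟨L₁, L₂, hLsplit⟩ := List.append_of_mem ht₀mem
      choose f hf1 hf2 using cs.exists_reduced_word
      have hjoinprod : ∀ L' : List W, π (L'.map f).flatten = L'.prod := by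
        intro L'
        induction L' with
        | nil => simp
        | cons x L' ih =>
          rw [List.map_cons, List.flatten_cons, cs.wordProd_append, ih, List.prod_cons, ← hf2]
      have hjoinlen : ∀ L' : List W, ((L'.map f).flatten).length = (L'.map cs.length).sum := by
        intro L'
        induction L' with
        | nil => simp
        | cons x L' ih =>
          rw [List.map_cons, List.flatten_cons, List.length_append, ih, List.map_cons,
            List.sum_cons, ← hf1, ← hf2]
      set Ω := (L₁.map f).flatten ++ γ ++ (L₂.map f).flatten with hΩ
      have hΩprod : π Ω = w := by
        rw [hΩ, cs.wordProd_append, cs.wordProd_append, hjoinprod L₁,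
          hjoinprod L₂, hγprod, ← hprodL, hLsplit]
        rw [List.prod_append, List.prod_cons, mul_assoc]
      have hΩlen : Ω.length = cs.length w := by
        rw [hΩ, List.length_append, List.length_append, hjoinlen, hjoinlen, hγlen,
          hlength, hLsplit, List.map_append, List.map_cons, List.sum_append, List.sum_cons]
        omega
      exact hsba Ω hΩprod hΩlen
        ⟨(L₁.map f).flatten ++ l₁, l₂ ++ (L₂.map f).flatten, a, b, by
          rw [hΩ, hγpat]; simp [List.append_assoc]⟩
    rw [hdepth, hlength]
    have e1 : (L.map fun t => (cs.length t + 1) / 2) = L.map fun _ => (1 : ℕ) :=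
      List.map_congr_left (fun t htm => by rw [hall t htm])
    have e2 : L.map cs.length = L.map fun _ => (1 : ℕ) :=
      List.map_congr_left (fun t htm => hall t htm)
    rw [e1, e2]

end CoxeterSystem

/-- **Theorem.** In any Coxeter system, `dp(w) = ℓ_S(w)` iff `w` is short-braid-avoiding
and the depth of `w` is realized by a reduced factorization. -/
theorem depth_eq_length_iff [Group W] {M : CoxeterMatrix B}
    (cs : CoxeterSystem M W) (w : W) :
    cs.depth w = cs.length w ↔
      cs.ShortBraidAvoiding w ∧ cs.DepthRealizedReduced w := by
  exact cs.main_aux w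
end

section
/- Let (W,S) be a Coxeter system and w ∈ W. Then dp(w) ≤ (ℓ_R(w) + ℓ_S(w))/2. Moreover, if the depth of w is realized by a reduced factorization, then dp(w) = (ℓ_R(w) + ℓ_S(w))/2. -/
open List

variable {B W : Type*}

/-- The reduced reflection length `ℓ_R(w)`: the minimal number of reflections in a
reduced factorization `w = t_1 ⋯ t_r` (i.e. one with `ℓ_S(w) = Σ ℓ_S(t_i)`). -/
noncomputable def CoxeterSystem.ellR [Group W] {M : CoxeterMatrix B}
    (cs : CoxeterSystem M W) (w : W) : ℕ :=
  sInf {r : ℕ | ∃ L : List W, (∀ t ∈ L, cs.IsReflection t) ∧ L.prod = w ∧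
    L.length = r ∧ cs.length w = (L.map cs.length).sum}

/-- **Proposition.** In any Coxeter system, `dp(w) ≤ (ℓ_R(w) + ℓ_S(w))/2`, with equality
whenever the depth of `w` is realized by a reduced factorization. -/
theorem depth_le_half_ellR_add_length [Group W] {M : CoxeterMatrix B}
    (cs : CoxeterSystem M W) (w : W) :
    cs.depth w ≤ (cs.ellR w + cs.length w) / 2 ∧
      (cs.DepthRealizedReduced w → cs.depth w = (cs.ellR w + cs.length w) / 2) := by
  -- key computation: for a list of reflections, 2 * Σ dp(t) = Σ ℓ(t) + |L|
  have key : ∀ L : List W, (∀ t ∈ L, cs.IsReflection t) →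
      2 * (L.map fun t => (cs.length t + 1) / 2).sum = (L.map cs.length).sum + L.length := by
    intro L hL
    induction L with
    | nil => simp
    | cons t L ih =>
      simp only [List.map_cons, List.sum_cons, List.length_cons]
      have ht : Odd (cs.length t) := (hL t (by simp)).odd_length
      have ih' := ih (fun t' ht' => hL t' (by simp [ht']))
      obtain ⟨k, hk⟩ := ht
      omega
  -- the ellR set is nonempty
  obtain ⟨ω, hωlen, hωprod⟩ := cs.exists_reduced_word w
  have hmem : cs.ellR w ∈ {r : ℕ | ∃ L : List W, (∀ t ∈ L, cs.IsReflection t) ∧ L.prod = w ∧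
      L.length = r ∧ cs.length w = (L.map cs.length).sum} := by
    apply Nat.sInf_mem
    refine ⟨ω.length, ω.map cs.simple, ?_, ?_, by simp, ?_⟩
    · intro t ht
      obtain ⟨i, _, rfl⟩ := List.mem_map.mp ht
      exact cs.isReflection_simple i
    · rw [hωprod]; rfl
    · rw [hωprod, show cs.length (cs.wordProd ω) = ω.length from hωlen, List.map_map]
      have : (cs.length ∘ cs.simple) = fun _ => 1 := by
        funext i; exact cs.length_simple i
      simp [this]
  obtain ⟨L, hLrefl, hLprod, hLlen, hLsum⟩ := hmem
  have h2 := key L hLrefl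
  have hdle : cs.depth w ≤ (L.map fun t => (cs.length t + 1) / 2).sum :=
    Nat.sInf_le ⟨L, hLrefl, hLprod, rfl⟩
  have h1 : cs.depth w ≤ (cs.ellR w + cs.length w) / 2 := by omega
  refine ⟨h1, fun ⟨L', hL'refl, hL'prod, hL'dp, hL'sum⟩ => ?_⟩
  have h2' := key L' hL'refl
  have hle : cs.ellR w ≤ L'.length :=
    Nat.sInf_le ⟨L', hL'refl, hL'prod, rfl, hL'sum⟩
  omega
end
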